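/- arXiv:math/0512027 — 8 statements merged into one kernel-verified Lean document; each statement's English description precedes it below -/
import Mathlib

section
/- Let d ≥ 1. For every (s_1,…,s_d) ∈ ℂ^d in the region (R), i.e. with Re(s_k + ⋯ + s_d) > d − k + 1 for every k = 1,…,d, the family of complex numbers ∏_{k=1}^d |f_k|^{-s_k}, indexed by all d-tuples (f_1,…,f_d) of monic polynomials in F_q[T] with deg(f_1) ≤ ⋯ ≤ deg(f_d), is absolutely summable; that is, the multiple zeta function Z_d(F_q[T]; s_1,…,s_d) converges absolutely on (R). -/
/-!
Write `n_k = deg f_k`, a nondecreasing sequence, so that the `f`-term has norm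
`q ^ (-∑ n_k Re s_k)`. Choose `δ > 0` with `Re (s_k + ⋯ + s_d) ≥ (d - k + 1) (1 + δ)` for all `k`;
summation by parts against these tail sums gives `∑ n_k Re s_k ≥ (1 + δ) ∑ n_k`. Hence the family is
dominated by `∏_k r ^ n_k` with `r = q ^ (-(1 + δ))`, a product of `d` copies of
`∑_{f monic} r ^ deg f ≤ ∑_n (q r) ^ n`, which converges because `q r = q ^ (-δ) < 1`.
-/

open Finset Polynomial

theorem Fin.sum_mul_nonneg_of_monotone_of_sum_Ici_nonneg {R : Type*} [CommRing R]
    [LinearOrder R] [IsStrictOrderedRing R] :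
    ∀ {d : ℕ} {n c : Fin d → R}, Monotone n → (∀ k, 0 ≤ n k) →
      (∀ k, 0 ≤ ∑ j ∈ Ici k, c j) → 0 ≤ ∑ k, n k * c k
  | 0, _, _, _, _, _ => by simp
  | d + 1, n, c, hn, hn0, hc => by
    have hsplit : ∑ k, n k * c k =
        n 0 * ∑ j ∈ Ici 0, c j + ∑ k : Fin d, (n k.succ - n 0) * c k.succ := by
      rw [show Ici (0 : Fin (d + 1)) = univ from Ici_bot]
      simp only [Fin.sum_univ_succ, sub_mul, sum_sub_distrib, ← mul_sum]
      ring
    have htail : 0 ≤ ∑ k : Fin d, (n k.succ - n 0) * c k.succ :=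
      sum_mul_nonneg_of_monotone_of_sum_Ici_nonneg
        (fun i j hij => sub_le_sub_right (hn (Fin.succ_le_succ_iff.mpr hij)) _)
        (fun k => sub_nonneg.mpr (hn (Fin.zero_le _)))
        (fun k => (Fin.sum_Ici_succ c k) ▸ hc k.succ)
    rw [hsplit]
    exact add_nonneg (mul_nonneg (hn0 0) (hc 0)) htail

theorem Fin.sum_mul_le_sum_mul_of_monotone_of_sum_Ici_le {R : Type*} [CommRing R]
    [LinearOrder R] [IsStrictOrderedRing R] {d : ℕ} {n σ τ : Fin d → R} (hn : Monotone n)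
    (hn0 : ∀ k, 0 ≤ n k) (h : ∀ k, ∑ j ∈ Ici k, τ j ≤ ∑ j ∈ Ici k, σ j) :
    ∑ k, n k * τ k ≤ ∑ k, n k * σ k := by
  have := sum_mul_nonneg_of_monotone_of_sum_Ici_nonneg (c := σ - τ) hn hn0 fun k => by
    simpa only [Pi.sub_apply, sum_sub_distrib, sub_nonneg] using h k
  simpa only [Pi.sub_apply, mul_sub, sum_sub_distrib, sub_nonneg] using this

theorem exists_pos_forall_mul_one_add_lt {ι : Type*} [Finite ι] {a b : ι → ℝ}
    (h : ∀ i, a i < b i) : ∃ δ > 0, ∀ i, a i * (1 + δ) < b i := by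
  have hlim (i : ι) : Filter.Tendsto (fun δ : ℝ => a i * (1 + δ)) (nhdsWithin 0 (Set.Ioi 0))
      (nhds (a i)) :=
    ((show Continuous fun δ : ℝ => a i * (1 + δ) by fun_prop).tendsto' 0 (a i)
      (by simp)).mono_left nhdsWithin_le_nhds
  exact ((Filter.eventually_all.mpr fun i => (hlim i).eventually_lt_const (h i)).and
    self_mem_nhdsWithin).exists.imp fun δ hδ => ⟨hδ.2, hδ.1⟩

theorem Polynomial.Monic.natDegree_sigma_coeff_injective {R : Type*} [Semiring R] :
    Function.Injective fun p : {p : R[X] // p.Monic} =>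
      (⟨p.1.natDegree, fun i : Fin p.1.natDegree => p.1.coeff i⟩ : Σ n, Fin n → R) := by
  rintro ⟨p, hp⟩ ⟨q, hq⟩ hpq
  obtain ⟨hdeg, hcoeff⟩ := Sigma.mk.inj_iff.mp hpq
  rw [Fin.heq_fun_iff hdeg] at hcoeff
  ext i
  rcases lt_trichotomy i p.natDegree with hi | rfl | hi
  · exact hcoeff ⟨i, hi⟩
  · rw [hp.coeff_natDegree, hdeg, hq.coeff_natDegree]
  · rw [coeff_eq_zero_of_natDegree_lt hi, coeff_eq_zero_of_natDegree_lt (hdeg ▸ hi)]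

theorem Polynomial.summable_pow_natDegree_monic {R : Type*} [Semiring R] [Fintype R] {r : ℝ}
    (hr : 0 ≤ r) (hRr : Fintype.card R * r < 1) :
    Summable fun p : {p : R[X] // p.Monic} => r ^ p.1.natDegree := by
  have hsigma : Summable fun x : Σ n, Fin n → R => r ^ x.1 := by
    rw [summable_sigma_of_nonneg fun _ => by positivity]
    refine ⟨fun _ => Summable.of_finite, ?_⟩
    simp only [tsum_fintype, sum_const, card_univ, Fintype.card_fun, Fintype.card_fin,
      nsmul_eq_mul, Nat.cast_pow, ← mul_pow]
    exact summable_geometric_of_lt_one (mul_nonneg (Nat.cast_nonneg _) hr) hRr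
  exact (hsigma.comp_injective Monic.natDegree_sigma_coeff_injective :)

theorem summable_fin_prod_of_nonneg {β : Type*} {w : β → ℝ} (hw0 : ∀ b, 0 ≤ w b)
    (hw : Summable w) (d : ℕ) : Summable fun g : Fin d → β => ∏ i, w (g i) := by
  induction d with
  | zero => exact Summable.of_finite
  | succ d ih =>
    have hmul : Summable fun p : β × (Fin d → β) => w p.1 * ∏ i, w (p.2 i) := by
      apply hw.mul_of_nonneg ih hw0
      exact fun g => prod_nonneg fun i _ => hw0 (g i)
    have := (Equiv.summable_iff (Fin.consEquiv fun _ : Fin (d + 1) => β).symm).mpr hmul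
    simpa [Fin.prod_univ_succ, Function.comp_def, Fin.consEquiv, Fin.tail] using this

theorem norm_natCast_pow_cpow {q : ℕ} (hq : 0 < q) (n : ℕ) (s : ℂ) :
    ‖((q : ℂ) ^ n) ^ s‖ = (q : ℝ) ^ (n * s.re) := by
  rw [← Nat.cast_pow, Complex.norm_natCast_cpow_of_pos (pow_pos hq n), Nat.cast_pow,
    ← Real.rpow_natCast, ← Real.rpow_mul (Nat.cast_nonneg q)]

theorem norm_prod_natCast_pow_cpow_neg_le {d q : ℕ} (hq : 1 ≤ q) {n : Fin d → ℕ}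
    (hn : Monotone n) {s : Fin d → ℂ} {c : ℝ}
    (hs : ∀ k : Fin d, ((d : ℝ) - k) * c ≤ (∑ j ∈ Ici k, s j).re) :
    ‖∏ k, ((q : ℂ) ^ n k) ^ (-s k)‖ ≤ ∏ k, ((q : ℝ) ^ (-c)) ^ n k := by
  have hq0 : (0 : ℝ) < q := by exact_mod_cast hq
  have habel : ∑ k, (n k : ℝ) * c ≤ ∑ k, (n k : ℝ) * (s k).re := by
    refine Fin.sum_mul_le_sum_mul_of_monotone_of_sum_Ici_le (fun i j hij => ?_)
      (fun k => Nat.cast_nonneg _) fun k => ?_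
    · exact_mod_cast hn hij
    · simpa [Complex.re_sum, Fin.card_Ici] using hs k
  simp only [norm_prod, norm_natCast_pow_cpow (by omega : 0 < q), ← Real.rpow_mul_natCast hq0.le,
    ← Real.rpow_sum_of_pos hq0]
  refine Real.rpow_le_rpow_of_exponent_le (by exact_mod_cast hq) ?_
  simpa [mul_comm c, Complex.neg_re] using habel

theorem multiple_zeta_FqT_abs_summable_general
    (F : Type*) [Field F] [Fintype F] (d : ℕ)
    (s : Fin d → ℂ)
    (hs : ∀ k : Fin d, (d : ℝ) - (k.val : ℝ) < (∑ j ∈ Finset.Ici k, s j).re) :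
    Summable fun f : {f : Fin d → Polynomial F //
        (∀ k, (f k).Monic) ∧ Monotone fun k => (f k).natDegree} =>
      ‖∏ k : Fin d, ((Fintype.card F : ℂ) ^ (f.1 k).natDegree : ℂ) ^ (-(s k))‖ := by
  have hq : 1 < Fintype.card F := Fintype.one_lt_card
  obtain ⟨δ, hδ, hδs⟩ := exists_pos_forall_mul_one_add_lt hs
  set r : ℝ := (Fintype.card F : ℝ) ^ (-(1 + δ))
  have hqr : Fintype.card F * r < 1 :=
    calc (Fintype.card F : ℝ) * r = (Fintype.card F : ℝ) ^ (-δ) := by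
          rw [show -δ = 1 + -(1 + δ) by ring, Real.rpow_add (by positivity), Real.rpow_one]
      _ < 1 := Real.rpow_lt_one_of_one_lt_of_neg (by exact_mod_cast hq) (neg_neg_of_pos hδ)
  have hmonic : Summable fun g : Fin d → {p : F[X] // p.Monic} => ∏ k, r ^ (g k).1.natDegree :=
    summable_fin_prod_of_nonneg (fun _ => by positivity)
      (summable_pow_natDegree_monic (by positivity) hqr) d
  have hinj : Function.Injective fun f : {f : Fin d → F[X] //
      (∀ k, (f k).Monic) ∧ Monotone fun k => (f k).natDegree} =>
        fun k => (⟨f.1 k, f.2.1 k⟩ : {p : F[X] // p.Monic}) :=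
    fun f g hfg => Subtype.ext <| funext fun k => congrArg Subtype.val (congrFun hfg k)
  exact (hmonic.comp_injective hinj :).of_nonneg_of_le (fun _ => norm_nonneg _)
    fun f => norm_prod_natCast_pow_cpow_neg_le hq.le f.2.2 fun k => (hδs k).le

/-- For `d ≥ 1` and `(s_1,…,s_d) ∈ ℂ^d` in the region (R)
(`Re(s_k + ⋯ + s_d) > d − k + 1` for all `k`), the family
`∏_{k=1}^d |f_k|^{-s_k}`, indexed by `d`-tuples of monic polynomials in
`F_q[T]` with nondecreasing degrees, is absolutely summable. -/
theorem multiple_zeta_FqT_abs_summable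
    (F : Type*) [Field F] [Fintype F] (d : ℕ) (hd : 1 ≤ d)
    (s : Fin d → ℂ)
    (hs : ∀ k : Fin d, (d : ℝ) - (k.val : ℝ) < (∑ j ∈ Finset.Ici k, s j).re) :
    Summable fun f : {f : Fin d → Polynomial F //
        (∀ k, (f k).Monic) ∧ Monotone fun k => (f k).natDegree} =>
      ‖∏ k : Fin d, ((Fintype.card F : ℂ) ^ (f.1 k).natDegree : ℂ) ^ (-(s k))‖ :=
  multiple_zeta_FqT_abs_summable_general F d s hs
end

section
/- Let d ≥ 1. For every (s_1,…,s_d) ∈ ℂ^d in the region (R), one has ∏_{k=1}^d (1 − q^{d−k+1−(s_k+⋯+s_d)}) · Z_d(F_q[T]; s_1,…,s_d) = 1; equivalently, Z_d(F_q[T]; s_1,…,s_d) = ∏_{k=1}^d (1 − q^{d−k+1−(s_k+⋯+s_d)})^{-1} on (R). -/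
/-!
Group the tuples `(f_1, …, f_d)` by their degree vector `n`, which ranges over the monotone
`n : Fin d → ℕ`. There are `∏ q ^ n_k` tuples of degrees `n`, each contributing `∏ q ^ (-n_k s_k)`,
so the fibre over `n` contributes `∏ t_k ^ n_k` with `t_k = q ^ (1 - s_k)`. Writing a monotone `n`
as the cumulative sums `n_k = m_1 + ⋯ + m_k` of an arbitrary `m : Fin d → ℕ` turns this into
`∏ u_j ^ m_j` with `u_j = t_j ⋯ t_d = q ^ (d - j + 1 - (s_j + ⋯ + s_d))`, and the sum over `m` is a
product of `d` geometric series. On (R) every `‖u_j‖ < 1`, so all series converge absolutely and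
the regrouping is legitimate.
-/

open Finset Polynomial

theorem summable_pi_prod_of_nonneg {β : Type*} {d : ℕ} {g : Fin d → β → ℝ}
    (hg₀ : ∀ j b, 0 ≤ g j b) (hg : ∀ j, Summable (g j)) :
    Summable fun m : Fin d → β => ∏ j, g j (m j) := by
  induction d with
  | zero => exact .of_finite
  | succ d ih =>
    rw [← (Fin.consEquiv fun _ => β).summable_iff]
    simpa [Function.comp_def, Fin.prod_univ_succ] using
      (hg 0).mul_of_nonneg (ih (fun j => hg₀ j.succ) fun j => hg j.succ)
        (hg₀ 0) fun m => prod_nonneg fun j _ => hg₀ j.succ (m j)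

theorem hasSum_pi_prod {R β : Type*} [NormedCommRing R] [NormOneClass R] [CompleteSpace R]
    {d : ℕ} {f : Fin d → β → R} {a : Fin d → R} (hf : ∀ j, HasSum (f j) (a j))
    (hfn : ∀ j, Summable fun b => ‖f j b‖) :
    HasSum (fun m : Fin d → β => ∏ j, f j (m j)) (∏ j, a j) := by
  induction d with
  | zero => simp
  | succ d ih =>
    have htail : HasSum (fun m : Fin d → β => ∏ j, f j.succ (m j)) (∏ j : Fin d, a j.succ) :=
      ih (fun j => hf j.succ) fun j => hfn j.succ
    have htail_norm : Summable fun m : Fin d → β => ‖∏ j, f j.succ (m j)‖ :=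
      (summable_pi_prod_of_nonneg (g := fun j b => ‖f j.succ b‖) (fun _ _ => norm_nonneg _)
        fun j => hfn j.succ).of_nonneg_of_le
        (fun _ => norm_nonneg _) fun m => norm_prod_le univ fun j => f j.succ (m j)
    have hsum := summable_mul_of_summable_norm (hfn 0) htail_norm
    have hprod := (hf 0).mul htail hsum
    rw [← (Fin.consEquiv fun _ => β).hasSum_iff, Fin.prod_univ_succ]
    simpa [Function.comp_def, Fin.prod_univ_succ] using hprod

theorem hasSum_pi_prod_pow_of_norm_lt_one {K : Type*} [NormedField K] [CompleteSpace K] {d : ℕ}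
    {r : Fin d → K} (hr : ∀ j, ‖r j‖ < 1) :
    HasSum (fun m : Fin d → ℕ => ∏ j, r j ^ m j) (∏ j, (1 - r j)⁻¹) :=
  hasSum_pi_prod (fun j => hasSum_geometric_of_norm_lt_one (hr j)) fun j => by
    simpa [norm_pow] using summable_geometric_of_lt_one (norm_nonneg _) (hr j)

section CumulativeSum

variable {d : ℕ}

def cumulativeSum (m : Fin d → ℕ) (k : Fin d) : ℕ := ∑ j ∈ Iic k, m j

lemma monotone_cumulativeSum (m : Fin d → ℕ) : Monotone (cumulativeSum m) :=
  fun _ _ hkl => sum_le_sum_of_subset (Iic_subset_Iic.mpr hkl)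

lemma cumulativeSum_apply_eq_add (m : Fin d → ℕ) (k : Fin d) :
    cumulativeSum m k = m k + ∑ j ∈ Iio k, m j := by
  rw [cumulativeSum, ← Iio_insert, sum_insert notMem_Iio_self]

lemma cumulativeSum_injective : Function.Injective (cumulativeSum (d := d)) := by
  intro m m' h
  funext k
  induction k using WellFoundedLT.induction with
  | ind k ih =>
    have hsum : ∑ j ∈ Iio k, m j = ∑ j ∈ Iio k, m' j :=
      sum_congr rfl fun j hj => ih j (mem_Iio.mp hj)
    have hk := congrFun h k
    rw [cumulativeSum_apply_eq_add, cumulativeSum_apply_eq_add, hsum] at hk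
    omega

lemma exists_cumulativeSum_eq_of_monotone {n : Fin d → ℕ} (hn : Monotone n) :
    ∃ m, cumulativeSum m = n := by
  -- `(Iio k).sup n` is the value of `n` just before `k`, or `0` at the first index
  refine ⟨fun k => n k - (Iio k).sup n, funext fun k => ?_⟩
  induction k using WellFoundedLT.induction with
  | ind k ih =>
    have hprev : ∑ j ∈ Iio k, (n j - (Iio j).sup n) = (Iio k).sup n := by
      rcases (Iio k).eq_empty_or_nonempty with hk | hk
      · simp [hk]
      · have hIio : Iio k = Iic ((Iio k).max' hk) := by
          ext j
          exact ⟨fun hj => mem_Iic.mpr (le_max' _ j hj),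
            fun hj => mem_Iio.mpr ((mem_Iic.mp hj).trans_lt (mem_Iio.mp (max'_mem _ hk)))⟩
        rw [hIio, ← cumulativeSum, ih _ (mem_Iio.mp (max'_mem _ hk))]
        exact le_antisymm (le_sup (mem_Iic.mpr le_rfl))
          (Finset.sup_le fun j hj => hn (mem_Iic.mp hj))
    have hle : (Iio k).sup n ≤ n k := Finset.sup_le fun j hj => hn (mem_Iio.mp hj).le
    rw [cumulativeSum_apply_eq_add, hprev]
    omega

noncomputable def cumulativeSumEquiv : (Fin d → ℕ) ≃ {n : Fin d → ℕ // Monotone n} :=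
  .ofBijective (fun m => ⟨cumulativeSum m, monotone_cumulativeSum m⟩)
    ⟨fun _ _ h => cumulativeSum_injective (congrArg Subtype.val h),
      fun n => (exists_cumulativeSum_eq_of_monotone n.2).imp fun _ h => Subtype.ext h⟩

lemma prod_pow_cumulativeSum {M : Type*} [CommMonoid M] (t : Fin d → M)
    (m : Fin d → ℕ) : ∏ k, t k ^ cumulativeSum m k = ∏ j, (∏ k ∈ Ici j, t k) ^ m j := calc
  ∏ k, t k ^ cumulativeSum m k = ∏ k, ∏ j ∈ Iic k, t k ^ m j := by
    simp only [cumulativeSum, prod_pow_eq_pow_sum]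
  _ = ∏ j, ∏ k ∈ Ici j, t k ^ m j := prod_comm' fun k j => by simp
  _ = ∏ j, (∏ k ∈ Ici j, t k) ^ m j := by simp only [prod_pow]

theorem hasSum_prod_pow_monotone {K : Type*} [NormedField K] [CompleteSpace K]
    {t : Fin d → K} (ht : ∀ j, ‖∏ k ∈ Ici j, t k‖ < 1) :
    HasSum (fun n : {n : Fin d → ℕ // Monotone n} => ∏ k, t k ^ n.1 k)
      (∏ j, (1 - ∏ k ∈ Ici j, t k)⁻¹) := by
  rw [← cumulativeSumEquiv.hasSum_iff]
  convert hasSum_pi_prod_pow_of_norm_lt_one ht using 2 with m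
  exact prod_pow_cumulativeSum t m

end CumulativeSum

theorem Set.Finite.hasSum_const {α M : Type*} [AddCommMonoid M] [TopologicalSpace M] {s : Set α}
    (hs : s.Finite) (c : M) : HasSum (fun _ : s => c) (s.ncard • c) := by
  have := hs.fintype
  convert hasSum_fintype fun _ : s => c
  rw [sum_const, card_univ, ← Nat.card_eq_fintype_card, Nat.card_coe_set_eq]

theorem hasSum_comp_of_finite_fibers {α β E : Type*} [NormedAddCommGroup E] [CompleteSpace E]
    (φ : α → β) (hφ : ∀ b, (φ ⁻¹' {b}).Finite) {g : β → E} {a : E}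
    (hg : HasSum (fun b => (φ ⁻¹' {b}).ncard • g b) a)
    (hg_norm : Summable fun b => (φ ⁻¹' {b}).ncard * ‖g b‖) : HasSum (g ∘ φ) a := by
  have hσ : HasSum (fun x : Σ b, {x // φ x = b} => g x.1) a := by
    refine HasSum.sigma_of_hasSum (f := fun x : Σ b, {x // φ x = b} => g x.1) hg
      (fun b => (hφ b).hasSum_const (g b)) (Summable.of_norm ?_)
    refine (summable_sigma_of_nonneg fun _ => norm_nonneg _).mpr
      ⟨fun b => ((hφ b).hasSum_const ‖g b‖).summable, ?_⟩
    convert hg_norm using 2 with b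
    exact ((hφ b).hasSum_const ‖g b‖).tsum_eq.trans (nsmul_eq_mul _ _)
  rw [← (Equiv.sigmaFiberEquiv φ).hasSum_iff]
  convert hσ using 1
  funext x
  exact congrArg g x.2.2

theorem Complex.cpow_sum {ι : Type*} {x : ℂ} (hx : x ≠ 0) (s : Finset ι) (f : ι → ℂ) :
    x ^ (∑ i ∈ s, f i) = ∏ i ∈ s, x ^ f i := by
  simp only [cpow_def_of_ne_zero hx, mul_sum, exp_sum]

theorem Complex.natCast_pow_mul_pow_cpow_neg {q : ℕ} (hq : q ≠ 0) (n : ℕ) (s : ℂ) :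
    (q : ℂ) ^ n * ((q : ℂ) ^ n) ^ (-s) = ((q : ℂ) ^ (1 - s)) ^ n := by
  rw [← natCast_cpow_natCast_mul, ← cpow_natCast, ← cpow_add _ _ (by exact_mod_cast hq),
    ← cpow_nat_mul]
  ring_nf

theorem Complex.prod_Ici_natCast_cpow_one_sub {q : ℕ} (hq : q ≠ 0) {d : ℕ} (s : Fin d → ℂ)
    (j : Fin d) :
    ∏ k ∈ Ici j, (q : ℂ) ^ (1 - s k) = (q : ℂ) ^ ((d : ℂ) - j - ∑ k ∈ Ici j, s k) := by
  rw [← cpow_sum (by exact_mod_cast hq), sum_sub_distrib, sum_const, Fin.card_Ici, nsmul_one,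
    Nat.cast_sub j.isLt.le]

theorem Polynomial.natCard_monic_natDegree_eq {R : Type*} [Semiring R] [Nontrivial R] (n : ℕ) :
    Nat.card {p : R[X] // p.Monic ∧ p.natDegree = n} = Nat.card R ^ n := by
  rw [Nat.card_congr ((monicEquivDegreeLT n).trans (degreeLTEquiv R n).toEquiv), Nat.card_fun,
    Nat.card_fin]

abbrev MonotoneMonicTuple (F : Type*) [Semiring F] (d : ℕ) :=
  {f : Fin d → F[X] // (∀ k, (f k).Monic) ∧ Monotone fun k => (f k).natDegree}

namespace MonotoneMonicTuple

variable {F : Type*} [Semiring F] {d : ℕ}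

def degrees (f : MonotoneMonicTuple F d) : {n : Fin d → ℕ // Monotone n} :=
  ⟨fun k => (f.1 k).natDegree, f.2.2⟩

def degreesFiberEquiv (n : {n : Fin d → ℕ // Monotone n}) :
    (degrees (F := F)) ⁻¹' {n} ≃ ∀ k, {p : F[X] // p.Monic ∧ p.natDegree = n.1 k} where
  toFun f k := ⟨f.1.1 k, f.1.2.1 k, congrFun (congrArg Subtype.val f.2) k⟩
  invFun p := ⟨⟨fun k => (p k).1, fun k => (p k).2.1, fun a b hab => by
      simpa only [(p a).2.2, (p b).2.2] using n.2 hab⟩, Subtype.ext (funext fun k => (p k).2.2)⟩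

lemma ncard_degrees_preimage [Nontrivial F] (n : {n : Fin d → ℕ // Monotone n}) :
    ((degrees (F := F)) ⁻¹' {n}).ncard = ∏ k, Nat.card F ^ n.1 k := by
  rw [← Nat.card_coe_set_eq, Nat.card_congr (degreesFiberEquiv n), Nat.card_pi]
  simp only [natCard_monic_natDegree_eq]

theorem hasSum_prod_cpow_neg [Nontrivial F] [Finite F] (s : Fin d → ℂ)
    (hs : ∀ j, ‖∏ k ∈ Ici j, (Nat.card F : ℂ) ^ (1 - s k)‖ < 1) :
    HasSum (fun f : MonotoneMonicTuple F d => ∏ k, ((Nat.card F : ℂ) ^ (f.1 k).natDegree) ^ (-s k))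
      (∏ j, (1 - ∏ k ∈ Ici j, (Nat.card F : ℂ) ^ (1 - s k))⁻¹) := by
  set q := Nat.card F
  have hq : q ≠ 0 := Nat.card_pos.ne'
  have hweight (n : {n : Fin d → ℕ // Monotone n}) :
      ((degrees (F := F)) ⁻¹' {n}).ncard • ∏ k, ((q : ℂ) ^ n.1 k) ^ (-s k) =
        ∏ k, ((q : ℂ) ^ (1 - s k)) ^ n.1 k := by
    rw [ncard_degrees_preimage, nsmul_eq_mul, Nat.cast_prod, ← prod_mul_distrib]
    push_cast
    exact prod_congr rfl fun k _ => Complex.natCast_pow_mul_pow_cpow_neg hq _ _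
  refine hasSum_comp_of_finite_fibers (g := fun n => ∏ k, ((q : ℂ) ^ n.1 k) ^ (-s k)) degrees
    (fun n => Set.finite_of_ncard_ne_zero ?_) ?_ ?_
  · rw [ncard_degrees_preimage]
    exact prod_ne_zero_iff.mpr fun k _ => pow_ne_zero _ hq
  · simpa only [hweight] using hasSum_prod_pow_monotone hs
  · have hnorm : ∀ j, ‖∏ k ∈ Ici j, ‖(q : ℂ) ^ (1 - s k)‖‖ < 1 := fun j => by
      rw [← norm_prod, norm_norm]; exact hs j
    refine (hasSum_prod_pow_monotone hnorm).summable.congr fun n => ?_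
    simp only [← norm_pow, ← norm_prod, ← hweight, nsmul_eq_mul, norm_mul, Complex.norm_natCast]

end MonotoneMonicTuple

theorem multiple_zeta_FqT_eval_general
    (F : Type*) [Field F] [Fintype F] (d : ℕ)
    (s : Fin d → ℂ)
    (hs : ∀ k : Fin d, (d : ℝ) - (k.val : ℝ) < (∑ j ∈ Finset.Ici k, s j).re) :
    (∏ k : Fin d,
        (1 - (Fintype.card F : ℂ) ^ ((d : ℂ) - (k.val : ℂ) - ∑ j ∈ Finset.Ici k, s j))) *
      (∑' f : {f : Fin d → Polynomial F //
          (∀ k, (f k).Monic) ∧ Monotone fun k => (f k).natDegree},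
        ∏ k : Fin d, ((Fintype.card F : ℂ) ^ (f.1 k).natDegree : ℂ) ^ (-(s k))) = 1 ∧
    HasSum (fun f : {f : Fin d → Polynomial F //
          (∀ k, (f k).Monic) ∧ Monotone fun k => (f k).natDegree} =>
        ∏ k : Fin d, ((Fintype.card F : ℂ) ^ (f.1 k).natDegree : ℂ) ^ (-(s k)))
      (∏ k : Fin d,
        (1 - (Fintype.card F : ℂ) ^ ((d : ℂ) - (k.val : ℂ) - ∑ j ∈ Finset.Ici k, s j))⁻¹) := by
  have hq : 0 < Fintype.card F := Fintype.card_pos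
  have hq_norm (j : Fin d) :
      ‖(Fintype.card F : ℂ) ^ ((d : ℂ) - j - ∑ k ∈ Ici j, s k)‖ < 1 := by
    rw [Complex.norm_natCast_cpow_of_pos hq]
    refine Real.rpow_lt_one_of_one_lt_of_neg (by exact_mod_cast Fintype.one_lt_card) ?_
    simpa using hs j
  have hsum := MonotoneMonicTuple.hasSum_prod_cpow_neg (F := F) s fun j => by
    rw [Nat.card_eq_fintype_card, Complex.prod_Ici_natCast_cpow_one_sub hq.ne']
    exact hq_norm j
  simp only [Nat.card_eq_fintype_card, Complex.prod_Ici_natCast_cpow_one_sub hq.ne'] at hsum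
  refine ⟨?_, hsum⟩
  rw [hsum.tsum_eq, ← prod_mul_distrib]
  exact prod_eq_one fun j _ =>
    mul_inv_cancel₀ (sub_ne_zero.mpr fun h => (hq_norm j).ne (by rw [← h, norm_one]))

/-- On the region (R), one has
`∏_{k=1}^d (1 − q^{d−k+1−(s_k+⋯+s_d)}) · Z_d(F_q[T]; s) = 1`, equivalently
`Z_d(F_q[T]; s) = ∏_{k=1}^d (1 − q^{d−k+1−(s_k+⋯+s_d)})⁻¹`. -/
theorem multiple_zeta_FqT_eval
    (F : Type*) [Field F] [Fintype F] (d : ℕ) (hd : 1 ≤ d)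
    (s : Fin d → ℂ)
    (hs : ∀ k : Fin d, (d : ℝ) - (k.val : ℝ) < (∑ j ∈ Finset.Ici k, s j).re) :
    (∏ k : Fin d,
        (1 - (Fintype.card F : ℂ) ^ ((d : ℂ) - (k.val : ℂ) - ∑ j ∈ Finset.Ici k, s j))) *
      (∑' f : {f : Fin d → Polynomial F //
          (∀ k, (f k).Monic) ∧ Monotone fun k => (f k).natDegree},
        ∏ k : Fin d, ((Fintype.card F : ℂ) ^ (f.1 k).natDegree : ℂ) ^ (-(s k))) = 1 ∧
    HasSum (fun f : {f : Fin d → Polynomial F //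
          (∀ k, (f k).Monic) ∧ Monotone fun k => (f k).natDegree} =>
        ∏ k : Fin d, ((Fintype.card F : ℂ) ^ (f.1 k).natDegree : ℂ) ^ (-(s k)))
      (∏ k : Fin d,
        (1 - (Fintype.card F : ℂ) ^ ((d : ℂ) - (k.val : ℂ) - ∑ j ∈ Finset.Ici k, s j))⁻¹) :=
  multiple_zeta_FqT_eval_general F d s hs
end

section
/- Let d ≥ 1 and write σ_k = s_k + ⋯ + s_d − (d − k) for k = 1,…,d. For every (s_1,…,s_d) ∈ ℂ^d such that q^{−σ_k} ≠ 1 and q^{1−σ_k} ≠ 1 for every k, the function ξ_d(F_q[T]; s_1,…,s_d) = ∏_{k=1}^d q^{−σ_k}/((1 − q^{−σ_k})(1 − q^{1−σ_k})) is invariant under the involution s_1 ↦ 2d − 1 − 2(s_2 + ⋯ + s_d) − s_1; that is, ξ_d(F_q[T]; 2d−1−2(s_2+⋯+s_d)−s_1, s_2,…,s_d) = ξ_d(F_q[T]; s_1, s_2,…,s_d). -/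
open Finset

lemma xiFqT_key (Q : ℂ) (hQ : Q ≠ 0) (x y : ℂ) (hxy : x = 1 - y)
    (h1 : Q ^ (-y) ≠ 1) (h2 : Q ^ (1 - y) ≠ 1) :
    Q ^ (-x) / ((1 - Q ^ (-x)) * (1 - Q ^ (1 - x))) =
    Q ^ (-y) / ((1 - Q ^ (-y)) * (1 - Q ^ (1 - y))) := by
  subst hxy
  have e1 : -(1 - y) = y - 1 := by ring
  have e2 : (1 : ℂ) - (1 - y) = y := by ring
  rw [e1, e2]
  have hA : Q ^ y ≠ 0 := by
    rw [Complex.cpow_def_of_ne_zero hQ]; exact Complex.exp_ne_zero _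
  have hny : Q ^ (-y) = (Q ^ y)⁻¹ := by rw [Complex.cpow_neg]
  have h1y : Q ^ ((1:ℂ) - y) = Q / Q ^ y := by
    rw [Complex.cpow_sub _ _ hQ, Complex.cpow_one]
  have hy1 : Q ^ (y - 1) = Q ^ y / Q := by
    rw [Complex.cpow_sub _ _ hQ, Complex.cpow_one]
  rw [hny] at h1; rw [h1y] at h2; rw [hny, h1y, hy1]
  have d1 : 1 - (Q ^ y)⁻¹ ≠ 0 := sub_ne_zero.mpr (fun e => h1 e.symm)
  have d2 : 1 - Q / Q ^ y ≠ 0 := sub_ne_zero.mpr (fun e => h2 e.symm)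
  field_simp
  ring

/-- The completed multiple zeta function over `F_q[T]` (its explicit
meromorphic continuation): `ξ_d(F_q[T]; s_1,…,s_d) =
∏_{k=1}^d q^{−σ_k}/((1 − q^{−σ_k})(1 − q^{1−σ_k}))` with
`σ_k = s_k + ⋯ + s_d − (d − k)` (here written for 0-indexed `k`). -/
noncomputable def xiFqT (q d : ℕ) (s : Fin d → ℂ) : ℂ :=
  ∏ k : Fin d,
    (q : ℂ) ^ (-((∑ j ∈ Finset.Ici k, s j) - ((d : ℂ) - 1 - (k.val : ℂ)))) /
      ((1 - (q : ℂ) ^ (-((∑ j ∈ Finset.Ici k, s j) - ((d : ℂ) - 1 - (k.val : ℂ))))) *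
       (1 - (q : ℂ) ^ (1 - ((∑ j ∈ Finset.Ici k, s j) - ((d : ℂ) - 1 - (k.val : ℂ))))))

/-- Whenever `q^{−σ_k} ≠ 1` and `q^{1−σ_k} ≠ 1` for all `k`,
`ξ_d(F_q[T]; ·)` is invariant under the involution
`s_1 ↦ 2d − 1 − 2(s_2 + ⋯ + s_d) − s_1`. -/
theorem xiFqT_functional_equation
    (F : Type*) [Field F] [Fintype F] (d : ℕ) (hd : 1 ≤ d) (s : Fin d → ℂ)
    (h : ∀ k : Fin d,
      (Fintype.card F : ℂ) ^
          (-((∑ j ∈ Finset.Ici k, s j) - ((d : ℂ) - 1 - (k.val : ℂ)))) ≠ 1 ∧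
      (Fintype.card F : ℂ) ^
          (1 - ((∑ j ∈ Finset.Ici k, s j) - ((d : ℂ) - 1 - (k.val : ℂ)))) ≠ 1) :
    xiFqT (Fintype.card F) d
      (Function.update s ⟨0, hd⟩
        (2 * (d : ℂ) - 1 - 2 * (∑ j ∈ Finset.Ioi (⟨0, hd⟩ : Fin d), s j) - s ⟨0, hd⟩)) =
    xiFqT (Fintype.card F) d s := by
  have hQ : (Fintype.card F : ℂ) ≠ 0 := Nat.cast_ne_zero.mpr Fintype.card_ne_zero
  unfold xiFqT
  apply Finset.prod_congr rfl
  intro k _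
  by_cases hk : k = ⟨0, hd⟩
  · subst hk
    have hmem : (⟨0, hd⟩ : Fin d) ∈ Finset.Ici (⟨0, hd⟩ : Fin d) := Finset.mem_Ici.mpr le_rfl
    have herase : (Finset.Ici (⟨0, hd⟩ : Fin d)).erase ⟨0, hd⟩ = Finset.Ioi (⟨0, hd⟩ : Fin d) := by
      ext j
      simp [Finset.mem_erase, Finset.mem_Ici, Finset.mem_Ioi, lt_iff_le_and_ne, and_comm, eq_comm]
    have hsum : ∑ j ∈ Finset.Ici (⟨0, hd⟩ : Fin d), s j
        = s ⟨0, hd⟩ + ∑ j ∈ Finset.Ioi (⟨0, hd⟩ : Fin d), s j := by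
      rw [← Finset.add_sum_erase _ _ hmem, herase]
    have hsum' : ∑ j ∈ Finset.Ici (⟨0, hd⟩ : Fin d),
        Function.update s ⟨0, hd⟩
          (2 * (d : ℂ) - 1 - 2 * (∑ j ∈ Finset.Ioi (⟨0, hd⟩ : Fin d), s j) - s ⟨0, hd⟩) j
        = (2 * (d : ℂ) - 1 - 2 * (∑ j ∈ Finset.Ioi (⟨0, hd⟩ : Fin d), s j) - s ⟨0, hd⟩)
          + ∑ j ∈ Finset.Ioi (⟨0, hd⟩ : Fin d), s j := by
      rw [← Finset.add_sum_erase _ _ hmem, Function.update_self, herase]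
      congr 1
      refine Finset.sum_congr rfl fun j hj => Function.update_of_ne ?_ _ _
      intro hj0
      exact absurd (hj0 ▸ Finset.mem_Ioi.mp hj) (lt_irrefl _)
    rw [hsum']
    refine xiFqT_key _ hQ _ _ ?_ (h _).1 (h _).2
    rw [hsum]
    simp only [Fin.val_mk, Nat.cast_zero]
    ring
  · have hsum : ∑ j ∈ Finset.Ici k,
        Function.update s ⟨0, hd⟩
          (2 * (d : ℂ) - 1 - 2 * (∑ j ∈ Finset.Ioi (⟨0, hd⟩ : Fin d), s j) - s ⟨0, hd⟩) j
        = ∑ j ∈ Finset.Ici k, s j := by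
      refine Finset.sum_congr rfl fun j hj => Function.update_of_ne ?_ _ _
      intro hj0
      have hkj : k ≤ j := Finset.mem_Ici.mp hj
      rw [hj0] at hkj
      exact hk (le_antisymm hkj (Fin.mk_le_of_le_val (Nat.zero_le _)))
    rw [hsum]
end

section
/- Let d ≥ 1, let q ≥ 2 be an integer, let C > 0, and let (b_n)_{n≥0} be a sequence of nonnegative real numbers satisfying b_n ≤ C·q^n for every n. Then for every (s_1,…,s_d) ∈ ℂ^d in the region (R), the family of complex numbers ∏_{k=1}^d b_{n_k}·q^{−n_k s_k}, indexed by all tuples of natural numbers with 0 ≤ n_1 ≤ ⋯ ≤ n_d, is absolutely summable. -/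
/-!
Write a monotone tuple `n` through its increments `m_j = n_j - n_{j-1}`, so that
`n_k = m_0 + ⋯ + m_k`. By Abel summation `∑ₖ n_k (1 - Re s_k) = ∑ⱼ m_j A_j` with
`A_j = (d - j) - Re (s_j + ⋯ + s_{d-1})`, and the region (R) says exactly that every `A_j < 0`.
Together with `b_n ≤ C qⁿ` this bounds the `n`-th term by `C^d ∏ⱼ (q^{A_j})^{m_j}`, a product of
geometric series; the increments determine `n`, so this majorant is summable over monotone tuples.
-/

open Finset

theorem summable_pi_prod_of_nonneg_s10 {ι κ : Type*} [Fintype ι] {g : ι → κ → ℝ}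
    (hg0 : ∀ i k, 0 ≤ g i k) (hg : ∀ i, Summable (g i)) :
    Summable fun x : ι → κ => ∏ i, g i (x i) := by
  classical
  refine summable_of_sum_le (c := ∏ i, ∑' k, g i k)
    (fun x => prod_nonneg fun i _ => hg0 i (x i)) fun u => ?_
  have hu : u ⊆ Fintype.piFinset fun i => u.image (· i) := fun x hx =>
    Fintype.mem_piFinset.2 fun i => mem_image_of_mem _ hx
  calc ∑ x ∈ u, ∏ i, g i (x i)
      ≤ ∑ x ∈ Fintype.piFinset (fun i => u.image (· i)), ∏ i, g i (x i) :=
        sum_le_sum_of_subset_of_nonneg hu fun x _ _ => prod_nonneg fun i _ => hg0 i (x i)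
    _ = ∏ i, ∑ k ∈ u.image (· i), g i k := (prod_univ_sum _ _).symm
    _ ≤ ∏ i, ∑' k, g i k :=
        prod_le_prod (fun i _ => sum_nonneg fun k _ => hg0 i k)
          fun i _ => (hg i).sum_le_tsum _ fun k _ => hg0 i k

namespace Fin

variable {d : ℕ}

/-- Prepending `0` makes the first increment `n₀`. -/
def increments (n : Fin d → ℕ) (j : Fin d) : ℕ :=
  (cons 0 n : Fin (d + 1) → ℕ) j.succ - (cons 0 n : Fin (d + 1) → ℕ) j.castSucc

theorem cons_castSucc_le_of_monotone {n : Fin d → ℕ} (hn : Monotone n) (j : Fin d) :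
    (cons 0 n : Fin (d + 1) → ℕ) j.castSucc ≤ (cons 0 n : Fin (d + 1) → ℕ) j.succ :=
  monotone_iff_le_succ.1 (monotone_iff_forall_lt.2 <|
    (liftFun_cons (· ≤ ·)).2 ⟨fun _ => Nat.zero_le _, monotone_iff_forall_lt.1 hn⟩) j

theorem sum_Iic_increments {n : Fin d → ℕ} (hn : Monotone n) (k : Fin d) :
    ∑ j ∈ Iic k, (increments n j : ℝ) = n k := by
  simp only [increments, Nat.cast_sub (cons_castSucc_le_of_monotone hn _)]
  rw [sum_Iic_sub k fun j => ((cons 0 n : Fin (d + 1) → ℕ) j : ℝ)]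
  simp

theorem increments_injective :
    Function.Injective fun n : {n : Fin d → ℕ // Monotone n} => increments n.1 := by
  rintro ⟨n, hn⟩ ⟨n', hn'⟩ h
  ext k
  exact_mod_cast (sum_Iic_increments hn k).symm.trans
    ((congrArg (fun m => ∑ j ∈ Iic k, (m j : ℝ)) h).trans (sum_Iic_increments hn' k))

/-- Abel summation. -/
theorem sum_mul_eq_sum_increments_mul {n : Fin d → ℕ} (hn : Monotone n) (a : Fin d → ℝ) :
    ∑ k, (n k : ℝ) * a k = ∑ j, (increments n j : ℝ) * ∑ k ∈ Ici j, a k := by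
  simp_rw [← sum_Iic_increments hn, sum_mul, mul_sum]
  exact sum_comm' fun k j => by simp

end Fin

theorem summable_rpow_sum_mul_of_monotone {d : ℕ} {x : ℝ} (hx : 1 < x) {a : Fin d → ℝ}
    (ha : ∀ j, ∑ k ∈ Ici j, a k < 0) :
    Summable fun n : {n : Fin d → ℕ // Monotone n} => x ^ ∑ k, (n.1 k : ℝ) * a k := by
  have hx0 : 0 < x := zero_lt_one.trans hx
  have hgeom : Summable fun m : Fin d → ℕ => ∏ j, (x ^ ∑ k ∈ Ici j, a k) ^ m j :=
    summable_pi_prod_of_nonneg_s10 (fun _ _ => by positivity) fun j =>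
      summable_geometric_of_lt_one (by positivity) (Real.rpow_lt_one_of_one_lt_of_neg hx (ha j))
  refine (hgeom.comp_injective Fin.increments_injective).congr fun n => ?_
  rw [Function.comp_apply, Fin.sum_mul_eq_sum_increments_mul n.2, Real.rpow_sum_of_pos hx0]
  refine prod_congr rfl fun j _ => ?_
  rw [mul_comm, Real.rpow_mul hx0.le, Real.rpow_natCast]

theorem norm_ofReal_mul_natCast_cpow_le {q m : ℕ} (hq : 0 < q) {y C : ℝ} (hy : 0 ≤ y)
    (hyC : y ≤ C * (q : ℝ) ^ m) (s : ℂ) :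
    ‖(y : ℂ) * (q : ℂ) ^ (-(m : ℂ) * s)‖ ≤ C * (q : ℝ) ^ ((m : ℝ) * (1 - s.re)) := by
  have hq0 : (0 : ℝ) < q := Nat.cast_pos.2 hq
  have hre : (-(m : ℂ) * s).re = -(m * s.re) := by simp
  rw [norm_mul, Complex.norm_real, Real.norm_of_nonneg hy, Complex.norm_natCast_cpow_of_pos hq,
    hre, show (m : ℝ) * (1 - s.re) = m + -(m * s.re) by ring, Real.rpow_add hq0,
    Real.rpow_natCast, ← mul_assoc]
  exact mul_le_mul_of_nonneg_right hyC (by positivity)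

theorem multiple_zeta_general_abs_summable_general
    (d q : ℕ) (hq : 2 ≤ q) (C : ℝ)
    (b : ℕ → ℝ) (hb0 : ∀ n, 0 ≤ b n) (hb : ∀ n, b n ≤ C * (q : ℝ) ^ n)
    (s : Fin d → ℂ)
    (hs : ∀ k : Fin d, (d : ℝ) - (k.val : ℝ) < (∑ j ∈ Finset.Ici k, s j).re) :
    Summable fun n : {n : Fin d → ℕ // Monotone n} =>
      ‖∏ k : Fin d, (b (n.1 k) : ℂ) * (q : ℂ) ^ (-(n.1 k : ℂ) * s k)‖ := by
  have hq1 : (1 : ℝ) < q := by exact_mod_cast hq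
  have htail (j : Fin d) : ∑ k ∈ Ici j, (1 - (s k).re) < 0 := by
    rw [sum_sub_distrib, ← Complex.re_sum, sum_const, Fin.card_Ici, nsmul_one,
      Nat.cast_sub j.2.le]
    linarith [hs j]
  refine ((summable_rpow_sum_mul_of_monotone hq1 htail).mul_left (C ^ d)).of_nonneg_of_le
    (fun _ => norm_nonneg _) fun n => ?_
  calc ‖∏ k, (b (n.1 k) : ℂ) * (q : ℂ) ^ (-(n.1 k : ℂ) * s k)‖
      ≤ ∏ k, C * (q : ℝ) ^ ((n.1 k : ℝ) * (1 - (s k).re)) := by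
        rw [norm_prod]
        exact prod_le_prod (fun _ _ => norm_nonneg _) fun k _ =>
          norm_ofReal_mul_natCast_cpow_le (by omega) (hb0 _) (hb _) _
    _ = C ^ d * (q : ℝ) ^ ∑ k, (n.1 k : ℝ) * (1 - (s k).re) := by
        rw [prod_mul_distrib, prod_const, card_univ, Fintype.card_fin,
          Real.rpow_sum_of_pos (by positivity)]

/-- Let `d ≥ 1`, `q ≥ 2` an integer, `C > 0`, and `(b_n)` a
sequence of nonnegative reals with `b_n ≤ C·q^n`. For every `(s_1,…,s_d)` in
the region (R), the family `∏_{k=1}^d b_{n_k} q^{−n_k s_k}`, indexed by tuples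
`0 ≤ n_1 ≤ ⋯ ≤ n_d` of naturals, is absolutely summable. -/
theorem multiple_zeta_general_abs_summable
    (d q : ℕ) (hd : 1 ≤ d) (hq : 2 ≤ q) (C : ℝ) (hC : 0 < C)
    (b : ℕ → ℝ) (hb0 : ∀ n, 0 ≤ b n) (hb : ∀ n, b n ≤ C * (q : ℝ) ^ n)
    (s : Fin d → ℂ)
    (hs : ∀ k : Fin d, (d : ℝ) - (k.val : ℝ) < (∑ j ∈ Finset.Ici k, s j).re) :
    Summable fun n : {n : Fin d → ℕ // Monotone n} =>
      ‖∏ k : Fin d, (b (n.1 k) : ℂ) * (q : ℂ) ^ (-(n.1 k : ℂ) * s k)‖ :=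
  multiple_zeta_general_abs_summable_general d q hq C b hb0 hb s hs
end

section
/- Let q ≥ 2 be an integer and set b_n = (q^{n+1} − 1)/(q − 1) for n ∈ ℕ. For every (s, w) ∈ ℂ² with Re(s + w) > 2 and Re(w) > 1, the absolutely convergent double series satisfies Σ_{0 ≤ n ≤ m} b_n b_m q^{−ns} q^{−mw} = [q²/((q−1)²)]·1/((1 − q^{2−(s+w)})(1 − q^{1−w})) − [q/((q−1)²)]·1/((1 − q^{1−(s+w)})(1 − q^{−w})) − [q/((q−1)²)]·1/((1 − q^{1−(s+w)})(1 − q^{1−w})) + [1/((q−1)²)]·1/((1 − q^{−(s+w)})(1 − q^{−w})). -/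
open Complex

private def leEquiv : ℕ × ℕ ≃ {p : ℕ × ℕ // p.1 ≤ p.2} where
  toFun x := ⟨(x.1, x.1 + x.2), Nat.le_add_right _ _⟩
  invFun p := (p.1.1, p.1.2 - p.1.1)
  left_inv x := by simp
  right_inv p := by
    obtain ⟨⟨a, b⟩, h⟩ := p
    simp [Nat.add_sub_cancel' h]

private lemma key_hasSum (q : ℕ) (hq : 2 ≤ q) (x y : ℂ)
    (hxy : (x + y).re < 0) (hy : y.re < 0) :
    HasSum (fun p : {p : ℕ × ℕ // p.1 ≤ p.2} =>
      (q : ℂ) ^ ((p.1.1 : ℂ) * x) * (q : ℂ) ^ ((p.1.2 : ℂ) * y))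
      (1 / ((1 - (q : ℂ) ^ (x + y)) * (1 - (q : ℂ) ^ y))) := by
  have hq0 : 0 < q := by omega
  have hq1 : (1 : ℝ) < (q : ℝ) := by exact_mod_cast by omega
  have hnorm : ∀ z : ℂ, z.re < 0 → ‖(q : ℂ) ^ z‖ < 1 := fun z hz => by
    rw [norm_natCast_cpow_of_pos hq0]
    exact Real.rpow_lt_one_of_one_lt_of_neg hq1 hz
  have hA : HasSum (fun n : ℕ => ((q : ℂ) ^ (x + y)) ^ n)
      (1 - (q : ℂ) ^ (x + y))⁻¹ := hasSum_geometric_of_norm_lt_one (hnorm _ hxy)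
  have hB : HasSum (fun n : ℕ => ((q : ℂ) ^ y) ^ n)
      (1 - (q : ℂ) ^ y)⁻¹ := hasSum_geometric_of_norm_lt_one (hnorm _ hy)
  have hsummable : Summable (fun p : ℕ × ℕ =>
      ((q : ℂ) ^ (x + y)) ^ p.1 * ((q : ℂ) ^ y) ^ p.2) :=
    (hA.summable.norm.mul_norm hB.summable.norm).of_norm
  have hmul := hA.mul hB hsummable
  rw [← leEquiv.hasSum_iff]
  have hqC : (q : ℂ) ≠ 0 := Nat.cast_ne_zero.mpr (by omega)
  have heq : ∀ p : ℕ × ℕ,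
      ((fun p : {p : ℕ × ℕ // p.1 ≤ p.2} =>
        (q : ℂ) ^ ((p.1.1 : ℂ) * x) * (q : ℂ) ^ ((p.1.2 : ℂ) * y)) ∘ leEquiv) p
      = ((q : ℂ) ^ (x + y)) ^ p.1 * ((q : ℂ) ^ y) ^ p.2 := by
    rintro ⟨n, k⟩
    simp only [Function.comp, leEquiv, Equiv.coe_fn_mk]
    rw [← cpow_nat_mul, ← cpow_nat_mul, ← cpow_add _ _ hqC, ← cpow_add _ _ hqC]
    congr 1
    push_cast
    ring
  rw [show (1 : ℂ) / ((1 - (q : ℂ) ^ (x + y)) * (1 - (q : ℂ) ^ y)) =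
      (1 - (q : ℂ) ^ (x + y))⁻¹ * (1 - (q : ℂ) ^ y)⁻¹ by
    rw [one_div, mul_inv]]
  exact (funext heq) ▸ hmul

/-- With `b_n = (q^{n+1} − 1)/(q − 1)`, for `Re(s+w) > 2` and
`Re(w) > 1`, the double series `Σ_{0 ≤ n ≤ m} b_n b_m q^{−ns} q^{−mw}`
converges (absolutely) to the stated rational expression in
`q^{−(s+w)}` and `q^{−w}`. -/
theorem double_zeta_rational_function_field_eval
    (F : Type*) [Field F] [Fintype F] (s w : ℂ)
    (h1 : 2 < (s + w).re) (h2 : 1 < w.re) :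
    HasSum (fun p : {p : ℕ × ℕ // p.1 ≤ p.2} =>
        (((Fintype.card F : ℂ) ^ (p.1.1 + 1) - 1) / ((Fintype.card F : ℂ) - 1)) *
        (((Fintype.card F : ℂ) ^ (p.1.2 + 1) - 1) / ((Fintype.card F : ℂ) - 1)) *
        (Fintype.card F : ℂ) ^ (-(p.1.1 : ℂ) * s) *
        (Fintype.card F : ℂ) ^ (-(p.1.2 : ℂ) * w))
      ((Fintype.card F : ℂ) ^ 2 / ((Fintype.card F : ℂ) - 1) ^ 2 *
          (1 / ((1 - (Fintype.card F : ℂ) ^ ((2 : ℂ) - (s + w))) *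
                (1 - (Fintype.card F : ℂ) ^ (1 - w)))) -
        (Fintype.card F : ℂ) / ((Fintype.card F : ℂ) - 1) ^ 2 *
          (1 / ((1 - (Fintype.card F : ℂ) ^ (1 - (s + w))) *
                (1 - (Fintype.card F : ℂ) ^ (-w)))) -
        (Fintype.card F : ℂ) / ((Fintype.card F : ℂ) - 1) ^ 2 *
          (1 / ((1 - (Fintype.card F : ℂ) ^ (1 - (s + w))) *
                (1 - (Fintype.card F : ℂ) ^ (1 - w)))) +
        1 / ((Fintype.card F : ℂ) - 1) ^ 2 *
          (1 / ((1 - (Fintype.card F : ℂ) ^ (-(s + w))) *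
                (1 - (Fintype.card F : ℂ) ^ (-w))))) := by
  set q := Fintype.card F with hqdef
  have hq : 2 ≤ q := Fintype.one_lt_card
  have hqC : (q : ℂ) ≠ 0 := Nat.cast_ne_zero.mpr (by omega)
  have hq1C : (q : ℂ) - 1 ≠ 0 := by
    intro h
    have : (q : ℂ) = 1 := by linear_combination h
    have : q = 1 := by exact_mod_cast this
    omega
  -- the four exponent pairs
  have k1 := key_hasSum q hq (1 - s) (1 - w)
    (by simp only [add_re, sub_re, one_re]; linarith [h1, add_re s w ▸ h1]) (by simp; linarith)
  have k2 := key_hasSum q hq (1 - s) (-w)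
    (by simp only [add_re, sub_re, one_re, neg_re]; have := h1; simp [add_re] at this ⊢; linarith)
    (by simp; linarith)
  have k3 := key_hasSum q hq (-s) (1 - w)
    (by simp only [add_re, sub_re, one_re, neg_re]; have := h1; simp [add_re] at this ⊢; linarith)
    (by simp; linarith)
  have k4 := key_hasSum q hq (-s) (-w)
    (by have := h1; simp [add_re] at this ⊢; linarith) (by simp; linarith)
  have H := (((k1.mul_left ((q : ℂ) ^ 2 / ((q : ℂ) - 1) ^ 2)).sub
      (k2.mul_left ((q : ℂ) / ((q : ℂ) - 1) ^ 2))).sub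
      (k3.mul_left ((q : ℂ) / ((q : ℂ) - 1) ^ 2))).add
      (k4.mul_left (1 / ((q : ℂ) - 1) ^ 2))
  have hfun : ∀ p : {p : ℕ × ℕ // p.1 ≤ p.2},
      (((q : ℂ) ^ (p.1.1 + 1) - 1) / ((q : ℂ) - 1)) *
      (((q : ℂ) ^ (p.1.2 + 1) - 1) / ((q : ℂ) - 1)) *
      (q : ℂ) ^ (-(p.1.1 : ℂ) * s) * (q : ℂ) ^ (-(p.1.2 : ℂ) * w)
      = (q : ℂ) ^ 2 / ((q : ℂ) - 1) ^ 2 *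
          ((q : ℂ) ^ ((p.1.1 : ℂ) * (1 - s)) * (q : ℂ) ^ ((p.1.2 : ℂ) * (1 - w))) -
        (q : ℂ) / ((q : ℂ) - 1) ^ 2 *
          ((q : ℂ) ^ ((p.1.1 : ℂ) * (1 - s)) * (q : ℂ) ^ ((p.1.2 : ℂ) * (-w))) -
        (q : ℂ) / ((q : ℂ) - 1) ^ 2 *
          ((q : ℂ) ^ ((p.1.1 : ℂ) * (-s)) * (q : ℂ) ^ ((p.1.2 : ℂ) * (1 - w))) +
        1 / ((q : ℂ) - 1) ^ 2 *
          ((q : ℂ) ^ ((p.1.1 : ℂ) * (-s)) * (q : ℂ) ^ ((p.1.2 : ℂ) * (-w))) := by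
    rintro ⟨⟨n, m⟩, hp⟩
    simp only
    have e1 : (q : ℂ) ^ ((n : ℂ) * (1 - s)) = (q : ℂ) ^ n * (q : ℂ) ^ (-(n : ℂ) * s) := by
      rw [← cpow_natCast, ← cpow_add _ _ hqC]; ring_nf
    have e2 : (q : ℂ) ^ ((m : ℂ) * (1 - w)) = (q : ℂ) ^ m * (q : ℂ) ^ (-(m : ℂ) * w) := by
      rw [← cpow_natCast, ← cpow_add _ _ hqC]; ring_nf
    have e3 : (q : ℂ) ^ ((n : ℂ) * (-s)) = (q : ℂ) ^ (-(n : ℂ) * s) := by ring_nf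
    have e4 : (q : ℂ) ^ ((m : ℂ) * (-w)) = (q : ℂ) ^ (-(m : ℂ) * w) := by ring_nf
    rw [e1, e2, e3, e4, pow_succ, pow_succ]
    field_simp
    ring
  have hval : (q : ℂ) ^ 2 / ((q : ℂ) - 1) ^ 2 *
        (1 / ((1 - (q : ℂ) ^ ((1 - s) + (1 - w))) * (1 - (q : ℂ) ^ (1 - w)))) -
      (q : ℂ) / ((q : ℂ) - 1) ^ 2 *
        (1 / ((1 - (q : ℂ) ^ ((1 - s) + -w)) * (1 - (q : ℂ) ^ (-w)))) -
      (q : ℂ) / ((q : ℂ) - 1) ^ 2 *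
        (1 / ((1 - (q : ℂ) ^ (-s + (1 - w))) * (1 - (q : ℂ) ^ (1 - w)))) +
      1 / ((q : ℂ) - 1) ^ 2 *
        (1 / ((1 - (q : ℂ) ^ (-s + -w)) * (1 - (q : ℂ) ^ (-w))))
      = (q : ℂ) ^ 2 / ((q : ℂ) - 1) ^ 2 *
        (1 / ((1 - (q : ℂ) ^ ((2 : ℂ) - (s + w))) * (1 - (q : ℂ) ^ (1 - w)))) -
      (q : ℂ) / ((q : ℂ) - 1) ^ 2 *
        (1 / ((1 - (q : ℂ) ^ (1 - (s + w))) * (1 - (q : ℂ) ^ (-w)))) -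
      (q : ℂ) / ((q : ℂ) - 1) ^ 2 *
        (1 / ((1 - (q : ℂ) ^ (1 - (s + w))) * (1 - (q : ℂ) ^ (1 - w)))) +
      1 / ((q : ℂ) - 1) ^ 2 *
        (1 / ((1 - (q : ℂ) ^ (-(s + w))) * (1 - (q : ℂ) ^ (-w)))) := by
    rw [show (1 - s) + (1 - w) = (2 : ℂ) - (s + w) by ring,
        show (1 - s) + -w = 1 - (s + w) by ring,
        show -s + (1 - w) = 1 - (s + w) by ring,
        show -s + -w = -(s + w) by ring]
  rw [← hval]
  exact (funext hfun) ▸ H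
end

section
/- Let q ≥ 2 be the cardinality of a finite field F_q and set b_n = (q^{n+1} − 1)/(q − 1). For every (s, w) ∈ ℂ² with Re(s + w) > 2 and Re(w) > 1, one has the decomposition Σ_{0 ≤ n ≤ m} b_n b_m q^{−ns} q^{−mw} = [q²/((q−1)²)]·Z(F_q[T], s+w−1)·Z(F_q[T], w) − [q/((q−1)²)]·Z(F_q[T], s+w)·Z(F_q[T], w+1) − [q/((q−1)²)]·Z(F_q[T], s+w)·Z(F_q[T], w) + [1/((q−1)²)]·Z(F_q[T], s+w+1)·Z(F_q[T], w+1), where each one-variable series Z(F_q[T], ·) on the right converges absolutely (its argument having real part > 1). -/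
/-!
There are `q ^ n` monic polynomials of degree `n`, so `Z(F_q[T], z) = ∑ (q ^ (1 - z)) ^ n`
is the geometric series `(1 - q ^ (1 - z))⁻¹`. On the double zeta side, write `m = n + l` and
`x = q ^ (-s)`, `y = q ^ (-w)`: then `(q - 1)² b_n b_m x ^ n y ^ m` expands into four terms
`c α ^ n β ^ l` with `α ∈ {q² x y, q x y, x y}` and `β ∈ {q y, y}`, and each double geometric
series `∑ α ^ n β ^ l` is the product of two such one-variable zeta values.
-/

/-- The zeta function of `F_q[T]`: `Z(F_q[T], z) = Σ_{f monic} |f|^{−z}`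
with `|f| = q^{deg f}`. -/
noncomputable def polyZeta (F : Type*) [Field F] [Fintype F] (z : ℂ) : ℂ :=
  ∑' f : {f : Polynomial F // f.Monic},
    ((Fintype.card F : ℂ) ^ f.1.natDegree : ℂ) ^ (-z)

open Polynomial

section MonicCount

variable {R : Type*} [Semiring R] [Nontrivial R]

noncomputable def monicNatDegreeEquiv (n : ℕ) :
    {f : {f : R[X] // f.Monic} // f.1.natDegree = n} ≃ (Fin n → R) :=
  (Equiv.subtypeSubtypeEquivSubtypeInter _ _).trans
    ((monicEquivDegreeLT n).trans (degreeLTEquiv R n).toEquiv)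

variable [Fintype R]

instance (n : ℕ) : Finite {f : {f : R[X] // f.Monic} // f.1.natDegree = n} :=
  .of_equiv _ (monicNatDegreeEquiv n).symm

theorem card_monic_natDegree_eq (n : ℕ) :
    Nat.card {f : {f : R[X] // f.Monic} // f.1.natDegree = n} = Fintype.card R ^ n := by
  rw [Nat.card_congr (monicNatDegreeEquiv n), Nat.card_fun, Nat.card_eq_fintype_card,
    Nat.card_eq_fintype_card, Fintype.card_fin]

theorem hasSum_const_monic_natDegree {M : Type*} [AddCommMonoid M] [TopologicalSpace M]
    (n : ℕ) (a : M) :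
    HasSum (fun _ : {f : {f : R[X] // f.Monic} // f.1.natDegree = n} => a)
      (Fintype.card R ^ n • a) := by
  have := Fintype.ofFinite {f : {f : R[X] // f.Monic} // f.1.natDegree = n}
  rw [← card_monic_natDegree_eq n, Nat.card_eq_fintype_card, ← Finset.card_univ,
    ← Finset.sum_const]
  exact hasSum_fintype _

theorem hasSum_monic_comp_natDegree {E : Type*} [NormedAddCommGroup E] [CompleteSpace E]
    (g : ℕ → E) (hg : Summable fun n => (Fintype.card R : ℝ) ^ n * ‖g n‖) :
    HasSum (fun f : {f : R[X] // f.Monic} => g f.1.natDegree)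
      (∑' n, Fintype.card R ^ n • g n) := by
  let e := Equiv.sigmaFiberEquiv fun f : {f : R[X] // f.Monic} => f.1.natDegree
  have hsummable : Summable fun x : Σ n, {f : {f : R[X] // f.Monic} // f.1.natDegree = n} =>
      ‖g x.1‖ := by
    refine (summable_sigma_of_nonneg fun _ => norm_nonneg _).2
      ⟨fun n => .of_finite, hg.congr fun n => ?_⟩
    rw [← Nat.cast_pow, ← nsmul_eq_mul]
    exact ((hasSum_const_monic_natDegree n ‖g n‖).tsum_eq).symm
  have hsum := hsummable.of_norm.hasSum
  rw [← e.hasSum_iff, (hsum.sigma fun n => hasSum_const_monic_natDegree n (g n)).tsum_eq]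
  exact hsum.congr_fun fun x => congrArg g x.2.2

end MonicCount

section Cpow

theorem cpow_neg_natCast_mul (x : ℂ) (n : ℕ) (z : ℂ) : x ^ (-(n : ℂ) * z) = (x ^ (-z)) ^ n := by
  rw [neg_mul, ← mul_neg, Complex.cpow_nat_mul]

theorem natCast_pow_cpow_neg (q n : ℕ) (z : ℂ) : ((q : ℂ) ^ n) ^ (-z) = ((q : ℂ) ^ (-z)) ^ n := by
  rw [← Complex.natCast_cpow_natCast_mul, Complex.cpow_nat_mul]

variable {x : ℂ}

theorem cpow_neg_add (hx : x ≠ 0) (a b : ℂ) : x ^ (-(a + b)) = x ^ (-a) * x ^ (-b) := by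
  rw [neg_add, Complex.cpow_add _ _ hx]

theorem mul_cpow_neg_sub_one (hx : x ≠ 0) (z : ℂ) : x * x ^ (-(z - 1)) = x ^ 2 * x ^ (-z) := by
  rw [neg_sub', sub_neg_eq_add, Complex.cpow_add _ _ hx, Complex.cpow_one]
  ring

theorem mul_cpow_neg_add_one (hx : x ≠ 0) (z : ℂ) : x * x ^ (-(z + 1)) = x ^ (-z) := by
  rw [neg_add, Complex.cpow_add _ _ hx, Complex.cpow_neg_one]
  field_simp

end Cpow

theorem norm_natCast_mul_cpow_neg_lt_one {q : ℕ} (hq : 1 < q) {z : ℂ} (hz : 1 < z.re) :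
    ‖(q : ℂ) * (q : ℂ) ^ (-z)‖ < 1 := by
  have hq' : (1 : ℝ) < q := by exact_mod_cast hq
  rw [norm_mul, Complex.norm_natCast, Complex.norm_natCast_cpow_of_pos (by omega),
    Complex.neg_re, ← Real.rpow_one_add' (by positivity) (by linarith)]
  exact Real.rpow_lt_one_of_one_lt_of_neg hq' (by linarith)

section PolyZeta

variable (F : Type*) [Field F] [Fintype F]

theorem hasSum_monic_cpow {z : ℂ} (hz : 1 < z.re) :
    HasSum (fun f : {f : F[X] // f.Monic} => ((Fintype.card F : ℂ) ^ f.1.natDegree) ^ (-z))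
      (1 - Fintype.card F * (Fintype.card F : ℂ) ^ (-z))⁻¹ := by
  have hlt := norm_natCast_mul_cpow_neg_lt_one (Fintype.one_lt_card (α := F)) hz
  have hterm (n : ℕ) : Fintype.card F ^ n • ((Fintype.card F : ℂ) ^ n) ^ (-z)
      = (Fintype.card F * (Fintype.card F : ℂ) ^ (-z)) ^ n := by
    rw [nsmul_eq_mul, natCast_pow_cpow_neg, mul_pow, Nat.cast_pow]
  have hsum : Summable fun n : ℕ =>
      (Fintype.card F : ℝ) ^ n * ‖((Fintype.card F : ℂ) ^ n) ^ (-z)‖ := by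
    refine (summable_geometric_of_lt_one (norm_nonneg _) hlt).congr fun n => ?_
    rw [natCast_pow_cpow_neg, norm_pow, ← mul_pow, norm_mul, Complex.norm_natCast]
  have h := hasSum_monic_comp_natDegree (R := F) _ hsum
  rwa [tsum_congr hterm, tsum_geometric_of_norm_lt_one hlt] at h

theorem summable_norm_monic_cpow {z : ℂ} (hz : 1 < z.re) :
    Summable fun f : {f : F[X] // f.Monic} => ‖((Fintype.card F : ℂ) ^ f.1.natDegree) ^ (-z)‖ :=
  summable_norm_iff.2 (hasSum_monic_cpow F hz).summable

theorem polyZeta_eq {z : ℂ} (hz : 1 < z.re) :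
    polyZeta F z = (1 - Fintype.card F * (Fintype.card F : ℂ) ^ (-z))⁻¹ :=
  (hasSum_monic_cpow F hz).tsum_eq

end PolyZeta

theorem hasSum_geometric_mul_geometric {K : Type*} [NormedDivisionRing K] [CompleteSpace K]
    {a b : K} (ha : ‖a‖ < 1) (hb : ‖b‖ < 1) :
    HasSum (fun kl : ℕ × ℕ => a ^ kl.1 * b ^ kl.2) ((1 - a)⁻¹ * (1 - b)⁻¹) :=
  (hasSum_geometric_of_norm_lt_one ha).mul (hasSum_geometric_of_norm_lt_one hb)
    (summable_mul_of_summable_norm (summable_norm_geometric_of_norm_lt_one ha)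
      (summable_norm_geometric_of_norm_lt_one hb))

def prodEquivSubtypeFstLeSnd : ℕ × ℕ ≃ {p : ℕ × ℕ // p.1 ≤ p.2} where
  toFun kl := ⟨(kl.1, kl.1 + kl.2), Nat.le_add_right _ _⟩
  invFun p := (p.1.1, p.1.2 - p.1.1)
  left_inv _ := by simp
  right_inv := fun ⟨_, h⟩ => by simp [Nat.add_sub_cancel' h]

theorem hasSum_doubleZetaSeries {K : Type*} [NormedField K] [CompleteSpace K] {q x y : K}
    (hq : 1 < ‖q‖) (hxy : ‖q ^ 2 * (x * y)‖ < 1) (hy : ‖q * y‖ < 1) :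
    HasSum (fun p : {p : ℕ × ℕ // p.1 ≤ p.2} =>
        (q ^ (p.1.1 + 1) - 1) / (q - 1) * ((q ^ (p.1.2 + 1) - 1) / (q - 1)) *
          x ^ p.1.1 * y ^ p.1.2)
      (q ^ 2 / (q - 1) ^ 2 * ((1 - q ^ 2 * (x * y))⁻¹ * (1 - q * y)⁻¹) -
        q / (q - 1) ^ 2 * ((1 - q * (x * y))⁻¹ * (1 - y)⁻¹) -
        q / (q - 1) ^ 2 * ((1 - q * (x * y))⁻¹ * (1 - q * y)⁻¹) +
        1 / (q - 1) ^ 2 * ((1 - x * y)⁻¹ * (1 - y)⁻¹)) := by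
  have hq1 : q - 1 ≠ 0 := sub_ne_zero.2 fun h => by simp [h] at hq
  have of_norm_mul_lt_one (a : K) (ha : ‖q * a‖ < 1) : ‖a‖ < 1 := by
    rw [norm_mul] at ha
    exact lt_of_le_of_lt (le_mul_of_one_le_left (norm_nonneg a) hq.le) ha
  have hqxy : ‖q * (x * y)‖ < 1 := of_norm_mul_lt_one _ (by rwa [← mul_assoc, ← sq])
  have hxy' : ‖x * y‖ < 1 := of_norm_mul_lt_one _ hqxy
  have hy' : ‖y‖ < 1 := of_norm_mul_lt_one _ hy
  rw [← prodEquivSubtypeFstLeSnd.hasSum_iff]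
  refine HasSum.congr_fun ((((hasSum_geometric_mul_geometric hxy hy).mul_left
    (q ^ 2 / (q - 1) ^ 2)).sub
    ((hasSum_geometric_mul_geometric hqxy hy').mul_left (q / (q - 1) ^ 2))).sub
    ((hasSum_geometric_mul_geometric hqxy hy).mul_left (q / (q - 1) ^ 2)) |>.add
    ((hasSum_geometric_mul_geometric hxy' hy').mul_left (1 / (q - 1) ^ 2))) fun ⟨k, l⟩ => ?_
  simp only [prodEquivSubtypeFstLeSnd, Function.comp_apply, Equiv.coe_fn_mk]
  field_simp
  ring

/-- With `b_n = (q^{n+1} − 1)/(q − 1)`, for `Re(s+w) > 2` and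
`Re(w) > 1`, the double zeta function of `F_q(T)` decomposes as a rational
linear combination of products of one-variable zeta functions of `F_q[T]`,
each of whose defining series converges absolutely. -/
theorem double_zeta_rational_function_field_decomposition
    (F : Type*) [Field F] [Fintype F] (s w : ℂ)
    (h1 : 2 < (s + w).re) (h2 : 1 < w.re) :
    (∀ z ∈ ({s + w - 1, w, s + w, w + 1, s + w + 1} : Set ℂ),
      Summable fun f : {f : Polynomial F // f.Monic} =>
        ‖((Fintype.card F : ℂ) ^ f.1.natDegree : ℂ) ^ (-z)‖) ∧
    (∑' p : {p : ℕ × ℕ // p.1 ≤ p.2},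
        (((Fintype.card F : ℂ) ^ (p.1.1 + 1) - 1) / ((Fintype.card F : ℂ) - 1)) *
        (((Fintype.card F : ℂ) ^ (p.1.2 + 1) - 1) / ((Fintype.card F : ℂ) - 1)) *
        (Fintype.card F : ℂ) ^ (-(p.1.1 : ℂ) * s) *
        (Fintype.card F : ℂ) ^ (-(p.1.2 : ℂ) * w)) =
      (Fintype.card F : ℂ) ^ 2 / ((Fintype.card F : ℂ) - 1) ^ 2 *
          (polyZeta F (s + w - 1) * polyZeta F w) -
        (Fintype.card F : ℂ) / ((Fintype.card F : ℂ) - 1) ^ 2 *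
          (polyZeta F (s + w) * polyZeta F (w + 1)) -
        (Fintype.card F : ℂ) / ((Fintype.card F : ℂ) - 1) ^ 2 *
          (polyZeta F (s + w) * polyZeta F w) +
        1 / ((Fintype.card F : ℂ) - 1) ^ 2 *
          (polyZeta F (s + w + 1) * polyZeta F (w + 1)) := by
  have hsw_sub : 1 < (s + w - 1).re := by rw [Complex.sub_re, Complex.one_re]; linarith
  have hsw : 1 < (s + w).re := by linarith
  have hsw_add : 1 < (s + w + 1).re := by rw [Complex.add_re, Complex.one_re]; linarith
  have hw_add : 1 < (w + 1).re := by rw [Complex.add_re, Complex.one_re]; linarith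
  refine ⟨fun z hz => summable_norm_monic_cpow F ?_, ?_⟩
  · simp only [Set.mem_insert_iff, Set.mem_singleton_iff] at hz
    rcases hz with rfl | rfl | rfl | rfl | rfl <;> assumption
  have hq : 1 < Fintype.card F := Fintype.one_lt_card
  have hxy := norm_natCast_mul_cpow_neg_lt_one hq hsw_sub
  have hy := norm_natCast_mul_cpow_neg_lt_one hq h2
  rw [polyZeta_eq F hsw_sub, polyZeta_eq F h2, polyZeta_eq F hsw, polyZeta_eq F hw_add,
    polyZeta_eq F hsw_add]
  set q : ℂ := (Fintype.card F : ℂ)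
  have hq0 : q ≠ 0 := Nat.cast_ne_zero.2 Fintype.card_ne_zero
  simp only [cpow_neg_natCast_mul]
  rw [mul_cpow_neg_sub_one hq0, cpow_neg_add hq0] at hxy
  rw [mul_cpow_neg_sub_one hq0, mul_cpow_neg_add_one hq0, mul_cpow_neg_add_one hq0,
    cpow_neg_add hq0]
  exact (hasSum_doubleZetaSeries (by simpa [q] using hq) hxy hy).tsum_eq
end

section
/- Let q ≥ 2, g ≥ 1 and h ≥ 1 be integers. For all u, v ∈ ℂ with |u| < 1/q² and |v| < 1/q, the double series Σ_{n = 2g−1}^{∞} Σ_{m = 0}^{∞} [h(q^{n−g+1} − 1)/(q − 1)]·[h(q^{m+n−g+1} − 1)/(q − 1)]·u^n v^m converges absolutely and equals (h/(q−1))²·[ q^{2g}/((1 − qv)(1 − q²u)) − q^g/((1 − qv)(1 − qu)) − q^g/((1 − v)(1 − qu)) + 1/((1 − v)(1 − u)) ]·u^{2g−1}. -/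
/-!
For `n ≥ 2g − 1` the count `h(q^{n−g+1} − 1)/(q − 1)` involves no negative power of `q`: after
shifting `n` by `2g − 1` the summand is `(h/(q−1))² u^{2g−1}` times a combination of four double
geometric series `xⁿ yᵐ` with `x ∈ {q²u, qu, u}` and `y ∈ {qv, v}`, all convergent under the
bounds on `u` and `v`. Absolute convergence is automatic because `ℂ` is finite-dimensional over `ℝ`.
-/

theorem hasSum_geometric_mul_geometric_s15 {K : Type*} [NormedDivisionRing K] {x y : K}
    (hx : ‖x‖ < 1) (hy : ‖y‖ < 1) :
    HasSum (fun p : ℕ × ℕ => x ^ p.1 * y ^ p.2) ((1 - x)⁻¹ * (1 - y)⁻¹) :=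
  (hasSum_geometric_of_norm_lt_one hx).mul (hasSum_geometric_of_norm_lt_one hy) <|
    summable_mul_of_summable_norm' (summable_norm_geometric_of_norm_lt_one hx)
      (summable_geometric_of_norm_lt_one hx) (summable_norm_geometric_of_norm_lt_one hy)
      (summable_geometric_of_norm_lt_one hy)

theorem hasSum_ite_le_fst_iff {M : Type*} [AddCommMonoid M] [TopologicalSpace M]
    {f : ℕ × ℕ → M} {a : M} (N : ℕ) :
    HasSum (fun p => if N ≤ p.1 then f p else 0) a ↔
      HasSum (fun p : ℕ × ℕ => f (p.1 + N, p.2)) a := by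
  have hshift : Function.Injective fun p : ℕ × ℕ => (p.1 + N, p.2) := by
    rintro ⟨n, m⟩ ⟨n', m'⟩ h
    simp_all
  rw [← hshift.hasSum_iff]
  · simp [Function.comp_def]
  · rintro ⟨n, m⟩ hp
    refine if_neg fun hn => hp ⟨(n - N, m), ?_⟩
    simp only [Prod.mk.injEq, and_true]
    omega

theorem norm_natCast_pow_mul_lt_one {𝕜 : Type*} [RCLike 𝕜] {q j k : ℕ} (hq : 1 ≤ q)
    (hjk : j ≤ k) {x : 𝕜} (hx : ‖x‖ < 1 / (q : ℝ) ^ k) : ‖(q : 𝕜) ^ j * x‖ < 1 := by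
  have hqk : (0 : ℝ) < (q : ℝ) ^ k := by positivity
  rw [norm_mul, norm_pow, RCLike.norm_natCast]
  calc (q : ℝ) ^ j * ‖x‖ ≤ (q : ℝ) ^ k * ‖x‖ := by gcongr; exact_mod_cast hq
    _ < 1 := by rwa [lt_div_iff₀' hqk] at hx

theorem effective_divisor_double_tail_series_general
    (q g h : ℕ) (hq : 2 ≤ q) (hg : 1 ≤ g)
    (u v : ℂ) (hu : ‖u‖ < 1 / (q : ℝ) ^ 2) (hv : ‖v‖ < 1 / q) :
    Summable (fun p : ℕ × ℕ =>
      ‖if 2 * g - 1 ≤ p.1 then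
          ((h : ℂ) * ((q : ℂ) ^ ((p.1 : ℤ) - (g : ℤ) + 1) - 1) / ((q : ℂ) - 1)) *
          ((h : ℂ) * ((q : ℂ) ^ ((p.2 : ℤ) + (p.1 : ℤ) - (g : ℤ) + 1) - 1) / ((q : ℂ) - 1)) *
          u ^ p.1 * v ^ p.2
        else 0‖) ∧
    HasSum (fun p : ℕ × ℕ =>
        if 2 * g - 1 ≤ p.1 then
          ((h : ℂ) * ((q : ℂ) ^ ((p.1 : ℤ) - (g : ℤ) + 1) - 1) / ((q : ℂ) - 1)) *
          ((h : ℂ) * ((q : ℂ) ^ ((p.2 : ℤ) + (p.1 : ℤ) - (g : ℤ) + 1) - 1) / ((q : ℂ) - 1)) *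
          u ^ p.1 * v ^ p.2
        else 0)
      (((h : ℂ) / ((q : ℂ) - 1)) ^ 2 *
        ((q : ℂ) ^ (2 * g) / ((1 - (q : ℂ) * v) * (1 - (q : ℂ) ^ 2 * u)) -
          (q : ℂ) ^ g / ((1 - (q : ℂ) * v) * (1 - (q : ℂ) * u)) -
          (q : ℂ) ^ g / ((1 - v) * (1 - (q : ℂ) * u)) +
          1 / ((1 - v) * (1 - u))) * u ^ (2 * g - 1)) := by
  have hv' : ‖v‖ < 1 / (q : ℝ) ^ 1 := by rwa [pow_one]
  have hu2 : ‖(q : ℂ) ^ 2 * u‖ < 1 := norm_natCast_pow_mul_lt_one (by omega) le_rfl hu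
  have hu1 : ‖(q : ℂ) * u‖ < 1 := by
    simpa using norm_natCast_pow_mul_lt_one (j := 1) (by omega) one_le_two hu
  have hu0 : ‖u‖ < 1 := by
    simpa using norm_natCast_pow_mul_lt_one (j := 0) (by omega) zero_le_two hu
  have hv1 : ‖(q : ℂ) * v‖ < 1 := by
    simpa using norm_natCast_pow_mul_lt_one (j := 1) (by omega) le_rfl hv'
  have hv0 : ‖v‖ < 1 := by
    simpa using norm_natCast_pow_mul_lt_one (j := 0) (by omega) zero_le_one hv'
  have hsum := (((((hasSum_geometric_mul_geometric_s15 hu2 hv1).mul_left ((q : ℂ) ^ (2 * g))).sub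
    ((hasSum_geometric_mul_geometric_s15 hu1 hv1).mul_left ((q : ℂ) ^ g))).sub
    ((hasSum_geometric_mul_geometric_s15 hu1 hv0).mul_left ((q : ℂ) ^ g))).add
    (hasSum_geometric_mul_geometric_s15 hu0 hv0)).mul_left
      (((h : ℂ) / ((q : ℂ) - 1)) ^ 2 * u ^ (2 * g - 1))
  refine ⟨summable_norm_iff.mpr (HasSum.summable ?hasSum), ?hasSum⟩
  rw [hasSum_ite_le_fst_iff]
  refine (congrArg (HasSum _) ?value).mp (hsum.congr_fun fun ⟨n, m⟩ => ?term)
  case term =>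
    rw [show ((n + (2 * g - 1) : ℕ) : ℤ) - g + 1 = ((g + n : ℕ) : ℤ) by omega,
      show (m : ℤ) + ((n + (2 * g - 1) : ℕ) : ℤ) - g + 1 = ((g + n + m : ℕ) : ℤ) by omega,
      zpow_natCast, zpow_natCast]
    ring
  case value =>
    simp only [div_eq_mul_inv, mul_inv]
    ring

/-- For integers `q ≥ 2`, `g ≥ 1`, `h ≥ 1` and `u, v ∈ ℂ` with
`|u| < 1/q²`, `|v| < 1/q`, the double series
`Σ_{n ≥ 2g−1} Σ_{m ≥ 0} [h(q^{n−g+1}−1)/(q−1)]·[h(q^{m+n−g+1}−1)/(q−1)]·u^n v^m`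
converges absolutely to
`(h/(q−1))²·[q^{2g}/((1−qv)(1−q²u)) − q^g/((1−qv)(1−qu)) − q^g/((1−v)(1−qu))
+ 1/((1−v)(1−u))]·u^{2g−1}`. -/
theorem effective_divisor_double_tail_series
    (q g h : ℕ) (hq : 2 ≤ q) (hg : 1 ≤ g) (hh : 1 ≤ h)
    (u v : ℂ) (hu : ‖u‖ < 1 / (q : ℝ) ^ 2) (hv : ‖v‖ < 1 / q) :
    Summable (fun p : ℕ × ℕ =>
      ‖if 2 * g - 1 ≤ p.1 then
          ((h : ℂ) * ((q : ℂ) ^ ((p.1 : ℤ) - (g : ℤ) + 1) - 1) / ((q : ℂ) - 1)) *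
          ((h : ℂ) * ((q : ℂ) ^ ((p.2 : ℤ) + (p.1 : ℤ) - (g : ℤ) + 1) - 1) / ((q : ℂ) - 1)) *
          u ^ p.1 * v ^ p.2
        else 0‖) ∧
    HasSum (fun p : ℕ × ℕ =>
        if 2 * g - 1 ≤ p.1 then
          ((h : ℂ) * ((q : ℂ) ^ ((p.1 : ℤ) - (g : ℤ) + 1) - 1) / ((q : ℂ) - 1)) *
          ((h : ℂ) * ((q : ℂ) ^ ((p.2 : ℤ) + (p.1 : ℤ) - (g : ℤ) + 1) - 1) / ((q : ℂ) - 1)) *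
          u ^ p.1 * v ^ p.2
        else 0)
      (((h : ℂ) / ((q : ℂ) - 1)) ^ 2 *
        ((q : ℂ) ^ (2 * g) / ((1 - (q : ℂ) * v) * (1 - (q : ℂ) ^ 2 * u)) -
          (q : ℂ) ^ g / ((1 - (q : ℂ) * v) * (1 - (q : ℂ) * u)) -
          (q : ℂ) ^ g / ((1 - v) * (1 - (q : ℂ) * u)) +
          1 / ((1 - v) * (1 - u))) * u ^ (2 * g - 1)) :=
  effective_divisor_double_tail_series_general q g h hq hg u v hu hv
end

section
/- Let q ≥ 2, g ≥ 1 and h ≥ 1 be integers and let (b_n)_{n≥0} be a sequence of natural numbers with b_n = h(q^{n−g+1} − 1)/(q − 1) for every n > 2g − 2. For every (s, w) ∈ ℂ² with Re(s + w) > 2 and Re(w) > 1, setting u = q^{−(s+w)} and v = q^{−w}, one has Q(u,v)·Σ_{0 ≤ n ≤ m} b_n b_m q^{−ns} q^{−mw} = P_1(u,v) + P_2(u,v) + P_3(u,v), where Q(u,v) = (1−u)(1−qu)(1−q²u)(1−v)(1−qv)·∏_{n=0}^{2g−2} v^n, P_1(u,v) = Q(u,v)·Σ_{n=0}^{2g−2}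 Σ_{m=0}^{2g−2−n} b_n b_{m+n} u^n v^m, P_2(u,v) = (h/(q−1))·(1−u)(1−qu)(1−q²u)·[q^g(1−v) − (1−qv)]·v^{2g−1}·Σ_{k=0}^{2g−2} b_k u^k ∏_{n=0, n≠k}^{2g−2} v^n, and P_3(u,v) = (h²/(q−1)²)·∏_{n=0}^{2g−2} v^n · [ (1−qu)(1−v)(1−u)q^{2g} − (1−q²u)(1−v)(1−u)q^g − (1−qv)(1−q²u)(1−u)q^g + (1−qv)(1−q²u)(1−qu) ]·u^{2g−1}. -/
/-!
Writing `m = n + k`, the double zeta function becomes `∑ b n * b (n + k) * u ^ n * v ^ k` over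
`ℕ × ℕ`. From `N = 2g - 1` on, the sequence is affine in a geometric progression,
`b (N + j) = A * q ^ j - B` with `A = h q ^ g / (q - 1)` and `B = h / (q - 1)`. Hence each inner
sum over `k` is a finite sum plus two geometric tails in `v` and `q v`, and the outer sum over
`n ≥ N` is a combination of geometric series in `u`, `q u`, `q² u`. Clearing the five denominators
`(1 - u)(1 - q u)(1 - q² u)(1 - v)(1 - q v)` produces `P₁`, `P₂` and `P₃`.
-/

open Finset

@[simps]
def prodEquivSubtypeLe : ℕ × ℕ ≃ {p : ℕ × ℕ // p.1 ≤ p.2} where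
  toFun p := ⟨(p.1, p.1 + p.2), Nat.le_add_right _ _⟩
  invFun p := (p.1.1, p.1.2 - p.1.1)
  left_inv p := by simp
  right_inv p := Subtype.ext (Prod.ext rfl (Nat.add_sub_cancel' p.2))

def doubleZetaTerm (a : ℕ → ℂ) (u v : ℂ) (p : ℕ × ℕ) : ℂ :=
  a p.1 * a (p.1 + p.2) * u ^ p.1 * v ^ p.2

theorem one_sub_ne_zero_of_norm_lt_one {z : ℂ} (hz : ‖z‖ < 1) : 1 - z ≠ 0 :=
  sub_ne_zero.2 fun h => by simp [← h] at hz

theorem norm_lt_one_of_norm_mul_lt_one {r z : ℂ} (hr : 1 ≤ ‖r‖) (h : ‖r * z‖ < 1) : ‖z‖ < 1 :=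
  lt_of_le_of_lt (by rw [norm_mul]; exact le_mul_of_one_le_left (norm_nonneg z) hr) h

section AffineGeometric

variable {A B C D r u v : ℂ}

theorem hasSum_affine_geometric (hrv : ‖r * v‖ < 1) (hv : ‖v‖ < 1) :
    HasSum (fun k : ℕ => (A * r ^ k - B) * v ^ k) (A * (1 - r * v)⁻¹ - B * (1 - v)⁻¹) :=
  (((hasSum_geometric_of_norm_lt_one hrv).mul_left A).sub
    ((hasSum_geometric_of_norm_lt_one hv).mul_left B)).congr_fun fun k => by ring

theorem hasSum_affine_geometric_mul (hr2u : ‖r ^ 2 * u‖ < 1) (hru : ‖r * u‖ < 1) (hu : ‖u‖ < 1) :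
    HasSum (fun k : ℕ => (A * r ^ k - B) * (C * r ^ k - D) * u ^ k)
      (A * C * (1 - r ^ 2 * u)⁻¹ - (A * D + B * C) * (1 - r * u)⁻¹ + B * D * (1 - u)⁻¹) :=
  ((((hasSum_geometric_of_norm_lt_one hr2u).mul_left (A * C)).sub
    ((hasSum_geometric_of_norm_lt_one hru).mul_left (A * D + B * C))).add
    ((hasSum_geometric_of_norm_lt_one hu).mul_left (B * D))).congr_fun fun k => by ring

end AffineGeometric

theorem summable_doubleZetaTerm_of_norm_le {a : ℕ → ℂ} {c ρ : ℝ} {u v : ℂ} (hρ : 0 ≤ ρ)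
    (ha : ∀ n, ‖a n‖ ≤ c * ρ ^ n) (hu : ρ ^ 2 * ‖u‖ < 1) (hv : ρ * ‖v‖ < 1) :
    Summable (doubleZetaTerm a u v) := by
  have hc : 0 ≤ c := by simpa using (norm_nonneg _).trans (ha 0)
  refine Summable.of_norm_bounded
    (((summable_geometric_of_lt_one (by positivity) hu).mul_left (c ^ 2)).mul_of_nonneg
      (summable_geometric_of_lt_one (by positivity) hv) (fun _ => by positivity)
      (fun _ => by positivity)) ?_
  rintro ⟨n, k⟩
  calc ‖doubleZetaTerm a u v (n, k)‖ = ‖a n‖ * ‖a (n + k)‖ * ‖u‖ ^ n * ‖v‖ ^ k := by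
        simp only [doubleZetaTerm, norm_mul, norm_pow]
    _ ≤ (c * ρ ^ n) * (c * ρ ^ (n + k)) * ‖u‖ ^ n * ‖v‖ ^ k := by gcongr <;> exact ha _
    _ = c ^ 2 * (ρ ^ 2 * ‖u‖) ^ n * (ρ * ‖v‖) ^ k := by ring

section EventuallyAffineGeometric

variable {a : ℕ → ℂ} {N : ℕ} {A B r u v : ℂ}

theorem norm_le_of_eventually_affine_geometric (ha : ∀ j, a (N + j) = A * r ^ j - B)
    (hr : 1 ≤ ‖r‖) (n : ℕ) :
    ‖a n‖ ≤ (∑ i ∈ range N, ‖a i‖ + ‖A‖ + ‖B‖) * ‖r‖ ^ n := by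
  have h1 : 1 ≤ ‖r‖ ^ n := one_le_pow₀ hr
  have hsum : 0 ≤ ∑ i ∈ range N, ‖a i‖ := sum_nonneg fun _ _ => norm_nonneg _
  rcases lt_or_ge n N with hn | hn
  · have := single_le_sum (fun i _ => norm_nonneg (a i)) (mem_range.2 hn)
    nlinarith [norm_nonneg A, norm_nonneg B]
  · obtain ⟨j, rfl⟩ := Nat.exists_eq_add_of_le hn
    have hj : ‖r‖ ^ j ≤ ‖r‖ ^ (N + j) := pow_le_pow_right₀ hr (Nat.le_add_left _ _)
    have h1j : 1 ≤ ‖r‖ ^ j := one_le_pow₀ hr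
    calc ‖a (N + j)‖ ≤ ‖A‖ * ‖r‖ ^ j + ‖B‖ := by
          rw [ha, ← norm_pow, ← norm_mul]; exact norm_sub_le _ _
      _ ≤ (∑ i ∈ range N, ‖a i‖ + ‖A‖ + ‖B‖) * ‖r‖ ^ (N + j) := by
          nlinarith [norm_nonneg A, norm_nonneg B]

theorem hasSum_shift_of_le (ha : ∀ j, a (N + j) = A * r ^ j - B) (hrv : ‖r * v‖ < 1)
    (hv : ‖v‖ < 1) {n : ℕ} (hn : n ≤ N) :
    HasSum (fun k => a (n + k) * v ^ k)
      (∑ k ∈ range (N - n), a (n + k) * v ^ k +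
        v ^ (N - n) * (A * (1 - r * v)⁻¹ - B * (1 - v)⁻¹)) := by
  rw [← hasSum_nat_add_iff' (N - n), add_sub_cancel_left]
  refine ((hasSum_affine_geometric hrv hv).mul_left (v ^ (N - n))).congr_fun fun k => ?_
  rw [← ha, show n + (k + (N - n)) = N + k by omega, pow_add]
  ring

theorem hasSum_shift_add (ha : ∀ j, a (N + j) = A * r ^ j - B) (hrv : ‖r * v‖ < 1)
    (hv : ‖v‖ < 1) (j : ℕ) :
    HasSum (fun k => a (N + j + k) * v ^ k) (A * r ^ j * (1 - r * v)⁻¹ - B * (1 - v)⁻¹) :=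
  (hasSum_affine_geometric hrv hv).congr_fun fun k => by rw [add_assoc, ha, pow_add, mul_assoc]

theorem hasSum_doubleZetaTerm_of_eventually_affine_geometric
    (ha : ∀ j, a (N + j) = A * r ^ j - B)
    (hr : 1 ≤ ‖r‖) (hu : ‖r ^ 2 * u‖ < 1) (hv : ‖r * v‖ < 1) :
    HasSum (doubleZetaTerm a u v)
      (∑ n ∈ range N, ∑ k ∈ range (N - n), a n * a (n + k) * u ^ n * v ^ k +
        (∑ n ∈ range N, a n * u ^ n * v ^ (N - n)) * (A * (1 - r * v)⁻¹ - B * (1 - v)⁻¹) +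
        u ^ N * (A * (A * (1 - r * v)⁻¹) * (1 - r ^ 2 * u)⁻¹ -
          (A * (B * (1 - v)⁻¹) + B * (A * (1 - r * v)⁻¹)) * (1 - r * u)⁻¹ +
          B * (B * (1 - v)⁻¹) * (1 - u)⁻¹)) := by
  have hru : ‖r * u‖ < 1 := norm_lt_one_of_norm_mul_lt_one hr (by rwa [← mul_assoc, ← sq])
  have hu₁ : ‖u‖ < 1 := norm_lt_one_of_norm_mul_lt_one hr hru
  have hv₁ : ‖v‖ < 1 := norm_lt_one_of_norm_mul_lt_one hr hv
  have hF := summable_doubleZetaTerm_of_norm_le (norm_nonneg r)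
    (norm_le_of_eventually_affine_geometric ha hr) (by rwa [norm_mul, norm_pow] at hu)
    (by rwa [norm_mul] at hv)
  have hfiber : ∀ n, Summable fun k => a (n + k) * v ^ k := by
    intro n
    rcases le_or_gt n N with hn | hn
    · exact (hasSum_shift_of_le ha hv hv₁ hn).summable
    · obtain ⟨j, rfl⟩ := Nat.exists_eq_add_of_le hn.le
      exact (hasSum_shift_add ha hv hv₁ j).summable
  have hG : ∀ n, HasSum (fun k => doubleZetaTerm a u v (n, k))
      (a n * u ^ n * ∑' k, a (n + k) * v ^ k) := fun n =>
    ((hfiber n).hasSum.mul_left (a n * u ^ n)).congr_fun fun k => by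
      simp only [doubleZetaTerm]; ring
  have hhead : ∑ n ∈ range N, a n * u ^ n * ∑' k, a (n + k) * v ^ k =
      ∑ n ∈ range N, ∑ k ∈ range (N - n), a n * a (n + k) * u ^ n * v ^ k +
        (∑ n ∈ range N, a n * u ^ n * v ^ (N - n)) * (A * (1 - r * v)⁻¹ - B * (1 - v)⁻¹) := by
    rw [sum_mul, ← sum_add_distrib]
    refine sum_congr rfl fun n hn => ?_
    rw [(hasSum_shift_of_le ha hv hv₁ (mem_range.1 hn).le).tsum_eq, mul_add, mul_sum]
    congr 1
    · exact sum_congr rfl fun k _ => by ring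
    · ring
  have htail : HasSum (fun j => a (j + N) * u ^ (j + N) * ∑' k, a (j + N + k) * v ^ k)
      (u ^ N * (A * (A * (1 - r * v)⁻¹) * (1 - r ^ 2 * u)⁻¹ -
          (A * (B * (1 - v)⁻¹) + B * (A * (1 - r * v)⁻¹)) * (1 - r * u)⁻¹ +
          B * (B * (1 - v)⁻¹) * (1 - u)⁻¹)) :=
    ((hasSum_affine_geometric_mul hu hru hu₁).mul_left (u ^ N)).congr_fun fun j => by
      rw [add_comm j N, (hasSum_shift_add ha hv hv₁ j).tsum_eq, ha, pow_add]
      ring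
  have hGsum := (hasSum_nat_add_iff' N).1 (by rwa [hhead, add_sub_cancel_left])
  rw [← (hF.hasSum.prod_fiberwise hG).unique hGsum]
  exact hF.hasSum

theorem mul_tsum_doubleZetaTerm_of_eventually_affine_geometric
    (ha : ∀ j, a (N + j) = A * r ^ j - B)
    (hr : 1 ≤ ‖r‖) (hu : ‖r ^ 2 * u‖ < 1) (hv : ‖r * v‖ < 1) :
    (1 - u) * (1 - r * u) * (1 - r ^ 2 * u) * (1 - v) * (1 - r * v) *
        ∑' p, doubleZetaTerm a u v p =
      (1 - u) * (1 - r * u) * (1 - r ^ 2 * u) * (1 - v) * (1 - r * v) *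
          ∑ n ∈ range N, ∑ k ∈ range (N - n), a n * a (n + k) * u ^ n * v ^ k +
        (1 - u) * (1 - r * u) * (1 - r ^ 2 * u) * (A * (1 - v) - B * (1 - r * v)) *
          ∑ n ∈ range N, a n * u ^ n * v ^ (N - n) +
        u ^ N * (A ^ 2 * (1 - r * u) * (1 - v) * (1 - u) -
          A * B * (1 - r ^ 2 * u) * (1 - v) * (1 - u) -
          A * B * (1 - r * v) * (1 - r ^ 2 * u) * (1 - u) +
          B ^ 2 * (1 - r * v) * (1 - r ^ 2 * u) * (1 - r * u)) := by
  have hru : ‖r * u‖ < 1 := norm_lt_one_of_norm_mul_lt_one hr (by rwa [← mul_assoc, ← sq])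
  have h₁ := one_sub_ne_zero_of_norm_lt_one (norm_lt_one_of_norm_mul_lt_one hr hru)
  have h₂ := one_sub_ne_zero_of_norm_lt_one hru
  have h₃ := one_sub_ne_zero_of_norm_lt_one hu
  have h₄ := one_sub_ne_zero_of_norm_lt_one (norm_lt_one_of_norm_mul_lt_one hr hv)
  have h₅ := one_sub_ne_zero_of_norm_lt_one hv
  rw [(hasSum_doubleZetaTerm_of_eventually_affine_geometric ha hr hu hv).tsum_eq]
  -- The identity holds with the five factors as independent nonzero unknowns.
  generalize 1 - u = d₁ at *
  generalize 1 - r * u = d₂ at *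
  generalize 1 - r ^ 2 * u = d₃ at *
  generalize 1 - v = d₄ at *
  generalize 1 - r * v = d₅ at *
  field_simp
  ring

end EventuallyAffineGeometric

theorem norm_natCast_pow_mul_cpow_neg_lt_one {q : ℕ} (hq : 1 < q) {k : ℕ} {z : ℂ}
    (hz : (k : ℝ) < z.re) : ‖(q : ℂ) ^ k * (q : ℂ) ^ (-z)‖ < 1 := by
  have hq' : (1 : ℝ) < q := by exact_mod_cast hq
  rw [norm_mul, norm_pow, Complex.norm_natCast, Complex.norm_natCast_cpow_of_pos (by omega),
    Complex.neg_re, ← Real.rpow_natCast, ← Real.rpow_add (by positivity)]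
  exact Real.rpow_lt_one_of_one_lt_of_neg hq' (by linarith)

theorem mul_cpow_neg_mul_mul_cpow_neg_mul {x : ℂ} (hx : x ≠ 0) (c s w : ℂ) (n k : ℕ) :
    c * x ^ (-(n : ℂ) * s) * x ^ (-((n + k : ℕ) : ℂ) * w) =
      c * (x ^ (-(s + w))) ^ n * (x ^ (-w)) ^ k := by
  rw [mul_assoc, mul_assoc, ← Complex.cpow_nat_mul, ← Complex.cpow_nat_mul,
    ← Complex.cpow_add _ _ hx, ← Complex.cpow_add _ _ hx]
  push_cast
  ring_nf

theorem natCast_eq_div_of_mul_sub_one_eq {q h c e : ℕ} (hq : 1 < q)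
    (hc : c * (q - 1) = h * (q ^ e - 1)) :
    (c : ℂ) = h * ((q : ℂ) ^ e - 1) / ((q : ℂ) - 1) := by
  have hq' : (q : ℂ) - 1 ≠ 0 := sub_ne_zero.2 (by exact_mod_cast hq.ne')
  rw [eq_div_iff hq']
  have := congrArg (Nat.cast : ℕ → ℂ) hc
  push_cast [Nat.one_le_pow _ _ (by omega : 0 < q), hq.le] at this
  exact this

theorem natCast_two_mul_sub_one_add_eq {q g h : ℕ} {b : ℕ → ℕ} (hq : 1 < q) (hg : 1 ≤ g)
    (hb : ∀ n : ℕ, 2 * g - 2 < n → b n * (q - 1) = h * (q ^ (n - g + 1) - 1)) (j : ℕ) :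
    (b (2 * g - 1 + j) : ℂ) = h * (q : ℂ) ^ g / ((q : ℂ) - 1) * (q : ℂ) ^ j - h / ((q : ℂ) - 1) := by
  rw [natCast_eq_div_of_mul_sub_one_eq hq (hb _ (by omega)),
    show 2 * g - 1 + j - g + 1 = g + j by omega, pow_add]
  ring

theorem sum_mul_pow_sub_mul_prod_range_pow {R : Type*} [CommSemiring R] (f : ℕ → R) (v : R)
    (N : ℕ) :
    (∑ n ∈ range N, f n * v ^ (N - n)) * ∏ i ∈ range N, v ^ i =
      v ^ N * ∑ n ∈ range N, f n * ∏ i ∈ (range N).erase n, v ^ i := by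
  rw [sum_mul, mul_sum]
  refine sum_congr rfl fun n hn => ?_
  rw [← mul_prod_erase _ _ hn, ← Nat.sub_add_cancel (mem_range.1 hn).le, pow_add,
    Nat.sub_add_cancel (mem_range.1 hn).le]
  ring

theorem double_zeta_genus_ge_one_decomposition_general
    (q g h : ℕ) (hq : 2 ≤ q) (hg : 1 ≤ g)
    (b : ℕ → ℕ)
    (hb : ∀ n : ℕ, 2 * g - 2 < n → b n * (q - 1) = h * (q ^ (n - g + 1) - 1))
    (s w : ℂ) (h1 : 2 < (s + w).re) (h2 : 1 < w.re)
    (u v : ℂ) (hu : u = (q : ℂ) ^ (-(s + w))) (hv : v = (q : ℂ) ^ (-w)) :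
    ((1 - u) * (1 - (q : ℂ) * u) * (1 - (q : ℂ) ^ 2 * u) * (1 - v) * (1 - (q : ℂ) * v) *
        ∏ n ∈ Finset.range (2 * g - 1), v ^ n) *
      (∑' p : {p : ℕ × ℕ // p.1 ≤ p.2},
        (b p.1.1 : ℂ) * (b p.1.2 : ℂ) *
          (q : ℂ) ^ (-(p.1.1 : ℂ) * s) * (q : ℂ) ^ (-(p.1.2 : ℂ) * w)) =
    -- P₁(u,v)
    ((1 - u) * (1 - (q : ℂ) * u) * (1 - (q : ℂ) ^ 2 * u) * (1 - v) * (1 - (q : ℂ) * v) *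
        ∏ n ∈ Finset.range (2 * g - 1), v ^ n) *
      (∑ n ∈ Finset.range (2 * g - 1), ∑ m ∈ Finset.range (2 * g - 1 - n),
        (b n : ℂ) * (b (m + n) : ℂ) * u ^ n * v ^ m) +
    -- P₂(u,v)
    (h : ℂ) / ((q : ℂ) - 1) *
      ((1 - u) * (1 - (q : ℂ) * u) * (1 - (q : ℂ) ^ 2 * u)) *
      ((q : ℂ) ^ g * (1 - v) - (1 - (q : ℂ) * v)) * v ^ (2 * g - 1) *
      (∑ k ∈ Finset.range (2 * g - 1),
        (b k : ℂ) * u ^ k * ∏ n ∈ (Finset.range (2 * g - 1)).erase k, v ^ n) +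
    -- P₃(u,v)
    (h : ℂ) ^ 2 / ((q : ℂ) - 1) ^ 2 * (∏ n ∈ Finset.range (2 * g - 1), v ^ n) *
      ((1 - (q : ℂ) * u) * (1 - v) * (1 - u) * (q : ℂ) ^ (2 * g) -
        (1 - (q : ℂ) ^ 2 * u) * (1 - v) * (1 - u) * (q : ℂ) ^ g -
        (1 - (q : ℂ) * v) * (1 - (q : ℂ) ^ 2 * u) * (1 - u) * (q : ℂ) ^ g +
        (1 - (q : ℂ) * v) * (1 - (q : ℂ) ^ 2 * u) * (1 - (q : ℂ) * u)) *
      u ^ (2 * g - 1) := by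
  have hq1 : 1 < q := by omega
  have hqu : ‖(q : ℂ) ^ 2 * u‖ < 1 := hu ▸ norm_natCast_pow_mul_cpow_neg_lt_one hq1 (by simpa)
  have hqv : ‖(q : ℂ) * v‖ < 1 := by
    simpa [hv] using norm_natCast_pow_mul_cpow_neg_lt_one (k := 1) hq1 (by simpa)
  have hZ := mul_tsum_doubleZetaTerm_of_eventually_affine_geometric (a := fun n => (b n : ℂ))
    (natCast_two_mul_sub_one_add_eq hq1 hg hb) (by simpa using hq1.le) hqu hqv
  simp only [doubleZetaTerm] at hZ
  have hhead : ∑ n ∈ range (2 * g - 1), ∑ k ∈ range (2 * g - 1 - n),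
      (b n : ℂ) * b (n + k) * u ^ n * v ^ k = ∑ n ∈ range (2 * g - 1),
        ∑ m ∈ range (2 * g - 1 - n), (b n : ℂ) * b (m + n) * u ^ n * v ^ m :=
    sum_congr rfl fun n _ => sum_congr rfl fun k _ => by rw [add_comm n k]
  have hmid := sum_mul_pow_sub_mul_prod_range_pow (fun n => (b n : ℂ) * u ^ n) v (2 * g - 1)
  rw [← prodEquivSubtypeLe.tsum_eq, ← div_pow]
  simp only [prodEquivSubtypeLe_apply_coe,
    mul_cpow_neg_mul_mul_cpow_neg_mul (Nat.cast_ne_zero.2 (by omega : q ≠ 0)), ← hu, ← hv]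
  linear_combination (∏ n ∈ range (2 * g - 1), v ^ n) * hZ +
    (1 - u) * (1 - (q : ℂ) * u) * (1 - (q : ℂ) ^ 2 * u) * (1 - v) * (1 - (q : ℂ) * v) *
      (∏ n ∈ range (2 * g - 1), v ^ n) * hhead +
    (1 - u) * (1 - (q : ℂ) * u) * (1 - (q : ℂ) ^ 2 * u) *
      (h * (q : ℂ) ^ g / ((q : ℂ) - 1) * (1 - v) - h / ((q : ℂ) - 1) * (1 - (q : ℂ) * v)) * hmid

/-- Let `q ≥ 2`, `g ≥ 1`, `h ≥ 1` and `(b_n)` naturals with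
`b_n = h(q^{n−g+1} − 1)/(q − 1)` for `n > 2g − 2`. For `Re(s+w) > 2`,
`Re(w) > 1`, setting `u = q^{−(s+w)}`, `v = q^{−w}`, one has
`Q(u,v)·Z_2 = P_1(u,v) + P_2(u,v) + P_3(u,v)` with the explicit polynomials
`Q, P_1, P_2, P_3` of the paper. -/
theorem double_zeta_genus_ge_one_decomposition
    (q g h : ℕ) (hq : 2 ≤ q) (hg : 1 ≤ g) (hh : 1 ≤ h)
    (b : ℕ → ℕ)
    (hb : ∀ n : ℕ, 2 * g - 2 < n → b n * (q - 1) = h * (q ^ (n - g + 1) - 1))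
    (s w : ℂ) (h1 : 2 < (s + w).re) (h2 : 1 < w.re)
    (u v : ℂ) (hu : u = (q : ℂ) ^ (-(s + w))) (hv : v = (q : ℂ) ^ (-w)) :
    ((1 - u) * (1 - (q : ℂ) * u) * (1 - (q : ℂ) ^ 2 * u) * (1 - v) * (1 - (q : ℂ) * v) *
        ∏ n ∈ Finset.range (2 * g - 1), v ^ n) *
      (∑' p : {p : ℕ × ℕ // p.1 ≤ p.2},
        (b p.1.1 : ℂ) * (b p.1.2 : ℂ) *
          (q : ℂ) ^ (-(p.1.1 : ℂ) * s) * (q : ℂ) ^ (-(p.1.2 : ℂ) * w)) =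
    -- P₁(u,v)
    ((1 - u) * (1 - (q : ℂ) * u) * (1 - (q : ℂ) ^ 2 * u) * (1 - v) * (1 - (q : ℂ) * v) *
        ∏ n ∈ Finset.range (2 * g - 1), v ^ n) *
      (∑ n ∈ Finset.range (2 * g - 1), ∑ m ∈ Finset.range (2 * g - 1 - n),
        (b n : ℂ) * (b (m + n) : ℂ) * u ^ n * v ^ m) +
    -- P₂(u,v)
    (h : ℂ) / ((q : ℂ) - 1) *
      ((1 - u) * (1 - (q : ℂ) * u) * (1 - (q : ℂ) ^ 2 * u)) *
      ((q : ℂ) ^ g * (1 - v) - (1 - (q : ℂ) * v)) * v ^ (2 * g - 1) *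
      (∑ k ∈ Finset.range (2 * g - 1),
        (b k : ℂ) * u ^ k * ∏ n ∈ (Finset.range (2 * g - 1)).erase k, v ^ n) +
    -- P₃(u,v)
    (h : ℂ) ^ 2 / ((q : ℂ) - 1) ^ 2 * (∏ n ∈ Finset.range (2 * g - 1), v ^ n) *
      ((1 - (q : ℂ) * u) * (1 - v) * (1 - u) * (q : ℂ) ^ (2 * g) -
        (1 - (q : ℂ) ^ 2 * u) * (1 - v) * (1 - u) * (q : ℂ) ^ g -
        (1 - (q : ℂ) * v) * (1 - (q : ℂ) ^ 2 * u) * (1 - u) * (q : ℂ) ^ g +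
        (1 - (q : ℂ) * v) * (1 - (q : ℂ) ^ 2 * u) * (1 - (q : ℂ) * u)) *
      u ^ (2 * g - 1) :=
  double_zeta_genus_ge_one_decomposition_general q g h hq hg b hb s w h1 h2 u v hu hv
end
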